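/- arXiv:2510.26695 — 13 statements merged into one kernel-verified Lean document; each statement's English description precedes it below -/
import Mathlib

section
/- Let F be a nonempty index set, and for each α ∈ F let A_α be a commutative ring with a semi-transition map ψ_α : A_α → Set Λ_α (Λ_α nonempty). Suppose there exists a fixed positive integer m such that for every α ∈ F and all a, b ∈ A_α with ψ_α(a) ∩ ψ_α(b) = ∅, the ideal of A_α generated by a^m and b^m is principal. Then the map ψ on the product ring ∏_{α ∈ F} A_α, defined into subsets of the disjoint union Σ_{α ∈ F} Λ_α by ψ((a_α)_α) = ⋃_α {⟨α, λ⟩ | λ ∈ ψ_α(a_α)}, is a semi-transition map; in particular ∏_{α ∈ F} A_α is a semi-transitional ring. -/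
/-- A semi-transition map on a commutative ring `A` with values in subsets of a
nonempty set `Λ`. -/
structure IsSemiTransition {A : Type*} [CommRing A] {Λ : Type*} (ψ : A → Set Λ) : Prop where
  nonempty : Nonempty Λ
  map_mul : ∀ a b : A, ψ (a * b) = ψ a ∪ ψ b
  map_one : ψ 1 = ∅
  eq_univ_iff : ∀ a : A, ψ a = Set.univ ↔ a = 0
  inter_eq : ∀ a b : A, ∃ c ∈ Ideal.span {a, b}, ψ a ∩ ψ b = ψ c ∧ ψ c ⊆ ψ (a + b)
  principal : ∀ a b : A, ψ a ∩ ψ b = ∅ →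
    ∃ m n : ℕ, 0 < m ∧ 0 < n ∧ (Ideal.span {a ^ m, b ^ n} : Ideal A).IsPrincipal

/-- Theorem (products of semi-transitional rings): if each `A α` carries a
semi-transition map `ψ α` and there is a fixed `m > 0` such that disjointness of
`ψ α a` and `ψ α b` forces `(a^m, b^m)` to be principal, then the map
`ψ ((a_α)_α) = {⟨α, λ⟩ | λ ∈ ψ α (a α)}` is a semi-transition map on `∏ α, A α`;
in particular the product ring is a semi-transitional ring. -/
theorem product_is_semi_transitional {F : Type*} [Nonempty F]
    {A : F → Type*} [∀ α, CommRing (A α)] {Λ : F → Type*}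
    (ψ : ∀ α, A α → Set (Λ α)) (hψ : ∀ α, IsSemiTransition (ψ α))
    (m : ℕ) (hm : 0 < m)
    (hprin : ∀ (α : F) (a b : A α), ψ α a ∩ ψ α b = ∅ →
      (Ideal.span {a ^ m, b ^ m} : Ideal (A α)).IsPrincipal) :
    IsSemiTransition
      (fun a : ∀ α, A α => {p : Σ α : F, Λ α | p.2 ∈ ψ p.1 (a p.1)}) := by
  constructor
  · obtain ⟨α⟩ := ‹Nonempty F›
    obtain ⟨l⟩ := (hψ α).nonempty
    exact ⟨⟨α, l⟩⟩
  · intro a b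
    ext ⟨α, l⟩
    simp [(hψ α).map_mul]
  · ext ⟨α, l⟩
    simp [(hψ α).map_one]
  · intro a
    constructor
    · intro h
      funext α
      have hα : ψ α (a α) = Set.univ := by
        ext l
        simp only [Set.mem_univ, iff_true]
        have := h ▸ Set.mem_univ (⟨α, l⟩ : Σ α, Λ α)
        exact this
      exact ((hψ α).eq_univ_iff (a α)).mp hα
    · rintro rfl
      ext ⟨α, l⟩
      simp [((hψ α).eq_univ_iff (0 : A α)).mpr rfl]
  · intro a b
    choose c hc h1 h2 using fun α => (hψ α).inter_eq (a α) (b α)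
    choose u v huv using fun α => (Ideal.mem_span_pair).mp (hc α)
    refine ⟨fun α => c α, ?_, ?_, ?_⟩
    · exact Ideal.mem_span_pair.mpr ⟨u, v, funext fun α => huv α⟩
    · ext ⟨α, l⟩
      have := Set.ext_iff.mp (h1 α) l
      simpa using this
    · rintro ⟨α, l⟩ hl
      exact h2 α hl
  · intro a b hab
    have hα : ∀ α, ψ α (a α) ∩ ψ α (b α) = ∅ := by
      intro α
      ext l
      simp only [Set.mem_empty_iff_false, iff_false, Set.mem_inter_iff, not_and]
      intro h1 h2
      have : (⟨α, l⟩ : Σ α, Λ α) ∈ (∅ : Set (Σ α, Λ α)) := by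
        rw [← hab]; exact ⟨h1, h2⟩
      exact this
    choose g hg using fun α => (hprin α (a α) (b α) (hα α)).principal
    refine ⟨m, m, hm, hm, ⟨fun α => g α, ?_⟩⟩
    apply le_antisymm
    · rw [Ideal.span_le]
      rintro x hx
      simp only [Set.mem_insert_iff, Set.mem_singleton_iff] at hx
      have key : ∀ x : ∀ α, A α, (∀ α, x α ∈ Ideal.span {g α}) →
          x ∈ Ideal.span ({fun α => g α} : Set (∀ α, A α)) := by
        intro x hx
        choose t ht using fun α => (Ideal.mem_span_singleton.mp (hx α))
        exact Ideal.mem_span_singleton.mpr ⟨t, funext fun α => ht α⟩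
      rcases hx with rfl | rfl
      · exact key _ fun α => by
          simp only [Pi.pow_apply]
          rw [show Ideal.span {g α} = Ideal.span {a α ^ m, b α ^ m} from (hg α).symm]
          exact Ideal.subset_span (Set.mem_insert _ _)
      · exact key _ fun α => by
          simp only [Pi.pow_apply]
          rw [show Ideal.span {g α} = Ideal.span {a α ^ m, b α ^ m} from (hg α).symm]
          exact Ideal.subset_span (Set.mem_insert_of_mem _ rfl)
    · show Ideal.span {fun α => g α} ≤ _
      rw [Ideal.span_le, Set.singleton_subset_iff]
      have hgmem : ∀ α, g α ∈ Ideal.span {(a α) ^ m, (b α) ^ m} := fun α => by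
        rw [hg α]; exact Ideal.subset_span rfl
      choose p q hpq using fun α => Ideal.mem_span_pair.mp (hgmem α)
      exact Ideal.mem_span_pair.mpr ⟨p, q, funext fun α => hpq α⟩
end

section
/- Let ψ : A → Set Λ be a semi-transition map on a commutative ring A and set S = {a ∈ A | ψ(a) = ∅}. Then: S is a multiplicative submonoid of A not containing 0; the canonical ring homomorphism A → A_S into the localization A_S = S⁻¹A is injective; the assignment φ(a/t) = ψ(a) (for a ∈ A, t ∈ S) is a well-defined map φ : A_S → Set Λ which is a semi-transition map on A_S; and for every u ∈ A_S, u is a unit of A_S if and only if φ(u) = ∅. -/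
namespace Localization

variable {A : Type*} [CommRing A] {S : Submonoid A}

theorem isUnit_mk_one (s : S) : IsUnit (mk (1 : A) s) := by
  rw [mk_eq_mk'_apply]
  exact isUnit_of_invertible _

theorem mk_eq_algebraMap_mul (a : A) (s : S) :
    mk a s = algebraMap A (Localization S) a * mk 1 s := by
  rw [mk_eq_mk'_apply, mk_eq_mk'_apply, IsLocalization.mk'_eq_mul_mk'_one]

theorem span_mk_singleton (a : A) (s : S) :
    Ideal.span {mk a s} = Ideal.span {algebraMap A (Localization S) a} := by
  rw [mk_eq_algebraMap_mul, Ideal.span_singleton_mul_right_unit (isUnit_mk_one s)]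

theorem span_mk_pair (a b : A) (s t : S) :
    Ideal.span {mk a s, mk b t} = (Ideal.span {a, b}).map (algebraMap A (Localization S)) := by
  rw [Ideal.map_span, Set.image_pair, Ideal.span_insert, Ideal.span_insert, span_mk_singleton,
    span_mk_singleton]

end Localization

namespace IsSemiTransition

open Localization

variable {A : Type*} [CommRing A] {Λ : Type*} {ψ : A → Set Λ}

theorem map_zero (hψ : IsSemiTransition ψ) : ψ 0 = Set.univ :=
  (hψ.eq_univ_iff 0).mpr rfl

theorem map_zero_ne_empty (hψ : IsSemiTransition ψ) : ψ 0 ≠ ∅ := by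
  have := hψ.nonempty
  rw [hψ.map_zero]
  exact Set.univ_nonempty.ne_empty

theorem map_eq_empty_of_isUnit (hψ : IsSemiTransition ψ) {a : A} (ha : IsUnit a) : ψ a = ∅ := by
  obtain ⟨b, hab⟩ := isUnit_iff_exists_inv.mp ha
  have h := hψ.map_mul a b
  rw [hab, hψ.map_one] at h
  exact (Set.union_empty_iff.mp h.symm).1

theorem map_mul_of_eq_empty (hψ : IsSemiTransition ψ) {s : A} (hs : ψ s = ∅) (a : A) :
    ψ (s * a) = ψ a := by
  rw [hψ.map_mul, hs, Set.empty_union]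

theorem mem_nonZeroDivisors_of_eq_empty (hψ : IsSemiTransition ψ) {s : A} (hs : ψ s = ∅) :
    s ∈ nonZeroDivisors A := by
  refine mem_nonZeroDivisors_iff_right.mpr fun x hx => (hψ.eq_univ_iff x).mp ?_
  rw [← hψ.map_mul_of_eq_empty hs, mul_comm, hx, hψ.map_zero]

section

variable (hψ : IsSemiTransition ψ) {S : Submonoid A} (hS : ∀ s ∈ S, ψ s = ∅)
include hψ hS

theorem le_nonZeroDivisors : S ≤ nonZeroDivisors A :=
  fun s hs => hψ.mem_nonZeroDivisors_of_eq_empty (hS s hs)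

def localization : Localization S → Set Λ :=
  fun x => x.liftOn (fun a _ => ψ a) fun {a c s t} h => by
    obtain ⟨u, hu⟩ := r_iff_exists.mp h
    simpa only [hψ.map_mul_of_eq_empty (hS _ (SetLike.coe_mem _))] using congrArg ψ hu

@[simp]
theorem localization_mk (a : A) (s : S) : hψ.localization hS (Localization.mk a s) = ψ a :=
  liftOn_mk _ _ a s

theorem localization_map_mul (x y : Localization S) :
    hψ.localization hS (x * y) = hψ.localization hS x ∪ hψ.localization hS y := by
  induction x using Localization.induction_on with | H p => ?_
  induction y using Localization.induction_on with | H q => ?_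
  rw [mk_mul, localization_mk, localization_mk, localization_mk, hψ.map_mul]

theorem localization_eq_univ_iff (x : Localization S) :
    hψ.localization hS x = Set.univ ↔ x = 0 := by
  induction x using Localization.induction_on with | H p => ?_
  obtain ⟨a, s⟩ := p
  rw [localization_mk, hψ.eq_univ_iff, mk_eq_algebraMap_mul, (isUnit_mk_one s).mul_left_eq_zero,
    (IsLocalization.injective _ (hψ.le_nonZeroDivisors hS)).eq_iff' (RingHom.map_zero _)]

theorem localization_inter_eq (x y : Localization S) :
    ∃ c ∈ Ideal.span {x, y}, hψ.localization hS x ∩ hψ.localization hS y =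
      hψ.localization hS c ∧ hψ.localization hS c ⊆ hψ.localization hS (x + y) := by
  induction x using Localization.induction_on with | H p => ?_
  induction y using Localization.induction_on with | H q => ?_
  obtain ⟨a, s⟩ := p
  obtain ⟨b, t⟩ := q
  obtain ⟨c, hc, hinter, hsub⟩ := hψ.inter_eq (t * a) (s * b)
  have hc' : c ∈ Ideal.span {a, b} := by
    obtain ⟨x, y, rfl⟩ := Ideal.mem_span_pair.mp hc
    exact Ideal.mem_span_pair.mpr ⟨x * t, y * s, by ring⟩
  refine ⟨Localization.mk c 1, ?_, ?_, ?_⟩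
  · rw [span_mk_pair, mk_one_eq_algebraMap]
    exact Ideal.mem_map_of_mem _ hc'
  · rw [localization_mk, localization_mk, localization_mk, ← hinter,
      hψ.map_mul_of_eq_empty (hS _ t.2), hψ.map_mul_of_eq_empty (hS _ s.2)]
  · rw [add_mk, localization_mk, localization_mk, add_comm]
    exact hsub

theorem localization_principal (x y : Localization S)
    (h : hψ.localization hS x ∩ hψ.localization hS y = ∅) :
    ∃ m n : ℕ, 0 < m ∧ 0 < n ∧
      (Ideal.span {x ^ m, y ^ n} : Ideal (Localization S)).IsPrincipal := by
  induction x using Localization.induction_on with | H p => ?_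
  induction y using Localization.induction_on with | H q => ?_
  rw [localization_mk, localization_mk] at h
  obtain ⟨m, n, hm, hn, hprin⟩ := hψ.principal _ _ h
  refine ⟨m, n, hm, hn, ?_⟩
  rw [mk_pow, mk_pow, span_mk_pair]
  infer_instance

theorem isSemiTransition_localization : IsSemiTransition (hψ.localization hS) where
  nonempty := hψ.nonempty
  map_mul := hψ.localization_map_mul hS
  map_one := by rw [← mk_one, localization_mk, hψ.map_one]
  eq_univ_iff := hψ.localization_eq_univ_iff hS
  inter_eq := hψ.localization_inter_eq hS
  principal := hψ.localization_principal hS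

end

theorem isUnit_iff_localization_eq_empty (hψ : IsSemiTransition ψ) {S : Submonoid A}
    (hS : ∀ a, a ∈ S ↔ ψ a = ∅) (u : Localization S) :
    IsUnit u ↔ hψ.localization (fun s => (hS s).mp) u = ∅ := by
  refine ⟨(hψ.isSemiTransition_localization _).map_eq_empty_of_isUnit, fun hu => ?_⟩
  induction u using Localization.induction_on with | H p => ?_
  obtain ⟨a, s⟩ := p
  rw [localization_mk] at hu
  rw [mk_eq_algebraMap_mul]
  exact (IsLocalization.map_units _ ⟨a, (hS a).mpr hu⟩).mul (isUnit_mk_one s)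

end IsSemiTransition

/-- Theorem: for a semi-transition map `ψ` on `A`, the set `S = {a | ψ a = ∅}` is a
multiplicative submonoid of `A` not containing `0`; the canonical map `A → A_S` is
injective; `φ (a / t) = ψ a` gives a well-defined semi-transition map on `A_S`; and
`u ∈ A_S` is a unit iff `φ u = ∅`. -/
theorem localization_semi_transition {A : Type*} [CommRing A] {Λ : Type*}
    (ψ : A → Set Λ) (hψ : IsSemiTransition ψ) :
    ((1 : A) ∈ {a : A | ψ a = ∅} ∧
      (∀ a b : A, ψ a = ∅ → ψ b = ∅ → ψ (a * b) = ∅) ∧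
      (0 : A) ∉ {a : A | ψ a = ∅}) ∧
    ∀ S : Submonoid A, (S : Set A) = {a : A | ψ a = ∅} →
      Function.Injective (algebraMap A (Localization S)) ∧
      ∃ φ : Localization S → Set Λ,
        (∀ (a : A) (t : S), φ (Localization.mk a t) = ψ a) ∧
        IsSemiTransition φ ∧
        ∀ u : Localization S, IsUnit u ↔ φ u = ∅ := by
  refine ⟨⟨hψ.map_one, fun a b ha hb => by rw [hψ.map_mul_of_eq_empty ha, hb],
    hψ.map_zero_ne_empty⟩, fun S hSeq => ?_⟩
  have hS : ∀ a, a ∈ S ↔ ψ a = ∅ := Set.ext_iff.mp hSeq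
  have hS' : ∀ s ∈ S, ψ s = ∅ := fun s => (hS s).mp
  exact ⟨IsLocalization.injective _ (hψ.le_nonZeroDivisors hS'), hψ.localization hS',
    hψ.localization_mk hS', hψ.isSemiTransition_localization hS',
    hψ.isUnit_iff_localization_eq_empty hS⟩
end

section
/- Let ψ : A → Set Λ be a semi-transition map on a commutative ring A, and suppose A is a pm-ring. Then the localization A_S, where S = {a ∈ A | ψ(a) = ∅}, is also a pm-ring. -/
/-- A pm-ring: every prime ideal is contained in a unique maximal ideal. -/
def IsPMRing (A : Type*) [CommRing A] : Prop :=
  ∀ P : Ideal A, P.IsPrime → ∃! M : Ideal A, M.IsMaximal ∧ P ≤ M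

theorem IsPMRing.sup_ne_top {A : Type*} [CommRing A] (hpm : IsPMRing A) {P p q : Ideal A}
    [P.IsPrime] (hPp : P ≤ p) (hPq : P ≤ q) (hp : p ≠ ⊤) (hq : q ≠ ⊤) : p ⊔ q ≠ ⊤ := by
  obtain ⟨N, ⟨hN, -⟩, hN_unique⟩ := hpm P ‹_›
  have le_N : ∀ I : Ideal A, P ≤ I → I ≠ ⊤ → I ≤ N := fun I hPI hI ↦ by
    obtain ⟨N', hN', hIN'⟩ := I.exists_le_maximal hI
    exact hN_unique N' ⟨hN', hPI.trans hIN'⟩ ▸ hIN'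
  exact ne_top_of_le_ne_top hN.ne_top (sup_le (le_N p hPp hp) (le_N q hPq hq))

theorem IsLocalization.not_disjoint_under_sup {A L : Type*} [CommRing A] [CommRing L]
    [Algebra A L] (S : Submonoid A) [IsLocalization S L] {I J : Ideal L} (h : I ⊔ J = ⊤) :
    ¬Disjoint (S : Set A) ↑(I.under A ⊔ J.under A) := by
  rw [← map_algebraMap_ne_top_iff_disjoint S L, Ideal.map_sup, map_under S, map_under S, h,
    not_not]

theorem IsLocalization.isPMRing {A L : Type*} [CommRing A] [CommRing L] [Algebra A L]
    (S : Submonoid A) [IsLocalization S L] (hpm : IsPMRing A)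
    (hS : ∀ p q : Ideal A, p.IsPrime → q.IsPrime → Disjoint (S : Set A) p →
      Disjoint (S : Set A) q → ¬Disjoint (S : Set A) ↑(p ⊔ q) → p ⊔ q = ⊤) :
    IsPMRing L := by
  intro Q hQ
  obtain ⟨M, hM, hQM⟩ := Q.exists_le_maximal hQ.ne_top
  refine ⟨M, ⟨hM, hQM⟩, fun M' ⟨hM', hQM'⟩ ↦ by_contra fun hne ↦ ?_⟩
  have disjoint_under : ∀ J : Ideal L, J.IsMaximal → Disjoint (S : Set A) (J.under A) :=
    fun J hJ ↦ (disjoint_under_iff S L J).mpr hJ.ne_top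
  have under_ne_top : ∀ J : Ideal L, J.IsMaximal → J.under A ≠ ⊤ :=
    fun J hJ ↦ (Ideal.IsPrime.under A J).ne_top
  exact hpm.sup_ne_top (P := Q.under A) (Ideal.comap_mono hQM') (Ideal.comap_mono hQM)
    (under_ne_top M' hM') (under_ne_top M hM)
    (hS _ _ (Ideal.IsPrime.under A M') (Ideal.IsPrime.under A M) (disjoint_under M' hM')
      (disjoint_under M hM) (not_disjoint_under_sup S (hM'.coprime_of_ne hM hne)))

namespace IsSemiTransition

variable {A Λ : Type*} [CommRing A] {ψ : A → Set Λ}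

theorem map_pow (hψ : IsSemiTransition ψ) (a : A) {m : ℕ} (hm : 0 < m) : ψ (a ^ m) = ψ a := by
  induction m, hm using Nat.le_induction with
  | base => rw [pow_one]
  | succ k _ ih => rw [pow_succ, hψ.map_mul, ih, Set.union_self]

theorem subset_of_dvd (hψ : IsSemiTransition ψ) {d a : A} (h : d ∣ a) : ψ d ⊆ ψ a := by
  obtain ⟨c, rfl⟩ := h
  exact hψ.map_mul d c ▸ Set.subset_union_left

theorem inter_subset_add (hψ : IsSemiTransition ψ) (a b : A) : ψ a ∩ ψ b ⊆ ψ (a + b) := by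
  obtain ⟨c, -, hc, hc_add⟩ := hψ.inter_eq a b
  exact hc ▸ hc_add

theorem mem_nonZeroDivisors (hψ : IsSemiTransition ψ) {d : A} (hd : ψ d = ∅) :
    d ∈ nonZeroDivisors A := by
  refine mem_nonZeroDivisors_iff_right.mpr fun z hz ↦ (hψ.eq_univ_iff z).mp ?_
  rw [← Set.union_empty (ψ z), ← hd, ← hψ.map_mul, hz, (hψ.eq_univ_iff 0).mpr rfl]

theorem exists_isCoprime_cofactors (hψ : IsSemiTransition ψ) {a b : A} (hab : ψ (a + b) = ∅) :
    ∃ m n : ℕ, 0 < m ∧ 0 < n ∧ ∃ d a' b' : A,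
      ψ d = ∅ ∧ a ^ m = d * a' ∧ b ^ n = d * b' ∧ IsCoprime a' b' := by
  have hdisj : ψ a ∩ ψ b = ∅ := Set.subset_eq_empty (hψ.inter_subset_add a b) hab
  obtain ⟨m, n, hm, hn, hprincipal⟩ := hψ.principal a b hdisj
  obtain ⟨d, hd⟩ : ∃ d, Ideal.span {a ^ m, b ^ n} = Ideal.span {d} := hprincipal.principal
  have hd_dvd : ∀ x ∈ ({a ^ m, b ^ n} : Set A), d ∣ x := fun x hx ↦
    Ideal.mem_span_singleton.mp (hd ▸ Ideal.subset_span hx)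
  obtain ⟨a', ha'⟩ := hd_dvd _ (Set.mem_insert _ _)
  obtain ⟨b', hb'⟩ := hd_dvd _ (Set.mem_insert_of_mem _ rfl)
  have hdψ : ψ d = ∅ := Set.subset_eq_empty (Set.subset_inter
    (hψ.map_pow a hm ▸ hψ.subset_of_dvd ⟨a', ha'⟩)
    (hψ.map_pow b hn ▸ hψ.subset_of_dvd ⟨b', hb'⟩)) hdisj
  obtain ⟨x, y, hxy⟩ := Ideal.mem_span_pair.mp (hd ▸ Ideal.mem_span_singleton_self d :
    d ∈ Ideal.span {a ^ m, b ^ n})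
  refine ⟨m, n, hm, hn, d, a', b', hdψ, ha', hb', x, y, ?_⟩
  refine (mul_cancel_left_mem_nonZeroDivisors (hψ.mem_nonZeroDivisors hdψ)).mp ?_
  calc d * (x * a' + y * b') = x * a ^ m + y * b ^ n := by rw [ha', hb']; ring
    _ = d * 1 := by rw [hxy, mul_one]

theorem sup_eq_top_of_not_disjoint (hψ : IsSemiTransition ψ) {p q : Ideal A}
    [p.IsPrime] [q.IsPrime] (hp : Disjoint {a | ψ a = ∅} (p : Set A))
    (hq : Disjoint {a | ψ a = ∅} (q : Set A))
    (hpq : ¬Disjoint {a | ψ a = ∅} ↑(p ⊔ q)) : p ⊔ q = ⊤ := by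
  obtain ⟨s, hsψ, hs⟩ := Set.not_disjoint_iff.mp hpq
  obtain ⟨a, ha, b, hb, rfl⟩ := Submodule.mem_sup.mp hs
  obtain ⟨m, n, hm, hn, d, a', b', hd, ha', hb', x, y, hxy⟩ :=
    hψ.exists_isCoprime_cofactors hsψ
  have cofactor_mem : ∀ {I : Ideal A} [I.IsPrime], Disjoint {a | ψ a = ∅} (I : Set A) →
      ∀ {c c' : A} {k : ℕ}, 0 < k → c ∈ I → c ^ k = d * c' → c' ∈ I :=
    fun hI _ _ k hk hc hc' ↦ (Ideal.IsPrime.mul_mem_left_iff (Set.disjoint_left.mp hI hd)).mp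
      (hc' ▸ Ideal.pow_mem_of_mem _ hc k hk)
  rw [Ideal.eq_top_iff_one, ← hxy]
  exact add_mem (Ideal.mem_sup_left (Ideal.mul_mem_left _ x (cofactor_mem hp hm ha ha')))
    (Ideal.mem_sup_right (Ideal.mul_mem_left _ y (cofactor_mem hq hn hb hb')))

end IsSemiTransition

/-- Theorem: if `A` carries a semi-transition map `ψ` and `A` is a pm-ring, then the
localization of `A` at `S = {a | ψ a = ∅}` is also a pm-ring. -/
theorem localization_isPMRing {A : Type*} [CommRing A] {Λ : Type*}
    (ψ : A → Set Λ) (hψ : IsSemiTransition ψ) (hpm : IsPMRing A)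
    (S : Submonoid A) (hS : (S : Set A) = {a : A | ψ a = ∅}) :
    IsPMRing (Localization S) := by
  refine IsLocalization.isPMRing S hpm fun p q _ _ hp hq hpq ↦ ?_
  rw [hS] at hp hq hpq
  exact hψ.sup_eq_top_of_not_disjoint hp hq hpq
end

section
/- Let ψ : A → Set Λ be an associated semi-transition map on a commutative ring A. Then: (a) if I is a proper ideal of A, the family ψ[I] = {ψ(a) | a ∈ I} is a ψ-filter on Λ; (b) if 𝔉 is a ψ-filter on Λ, then ψ⁻¹[𝔉] = {a ∈ A | ψ(a) ∈ 𝔉} is a proper ideal of A. -/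
/-- An associated semi-transition map: a semi-transition map such that `ψ a = ∅`
implies that `a` is a unit. -/
def IsAssociatedSemiTransition {A : Type*} [CommRing A] {Λ : Type*} (ψ : A → Set Λ) : Prop :=
  IsSemiTransition ψ ∧ ∀ a : A, ψ a = ∅ → IsUnit a

/-- A `ψ`-filter on `Λ`: a nonempty subfamily of `{ψ a | a ∈ A}` not containing `∅`,
closed under the intersections `ψ a ∩ ψ b` and under supersets of the form `ψ c`. -/
structure IsPsiFilter {A : Type*} [CommRing A] {Λ : Type*} (ψ : A → Set Λ)
    (𝔉 : Set (Set Λ)) : Prop where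
  nonempty : 𝔉.Nonempty
  subset_range : 𝔉 ⊆ Set.range ψ
  empty_not_mem : ∅ ∉ 𝔉
  inter_mem : ∀ a b : A, ψ a ∈ 𝔉 → ψ b ∈ 𝔉 → ψ a ∩ ψ b ∈ 𝔉
  superset_mem : ∀ a c : A, ψ a ∈ 𝔉 → ψ a ⊆ ψ c → ψ c ∈ 𝔉

/-- Theorem: for an associated semi-transition map `ψ` on `A`:
(a) if `I` is a proper ideal of `A`, then `ψ[I] = {ψ a | a ∈ I}` is a `ψ`-filter on `Λ`;
(b) if `𝔉` is a `ψ`-filter on `Λ`, then `{a | ψ a ∈ 𝔉}` is a proper ideal of `A`. -/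
theorem psiFilter_ideal_correspondence {A : Type*} [CommRing A] {Λ : Type*}
    (ψ : A → Set Λ) (hψ : IsAssociatedSemiTransition ψ) :
    (∀ I : Ideal A, I ≠ ⊤ → IsPsiFilter ψ (ψ '' (I : Set A))) ∧
    (∀ 𝔉 : Set (Set Λ), IsPsiFilter ψ 𝔉 →
      ∃ J : Ideal A, J ≠ ⊤ ∧ (J : Set A) = {a : A | ψ a ∈ 𝔉}) := by
  obtain ⟨hst, hassoc⟩ := hψ
  constructor
  · intro I hI
    refine ⟨⟨ψ 0, 0, I.zero_mem, rfl⟩, ?_, ?_, ?_, ?_⟩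
    · rintro s ⟨a, _, rfl⟩; exact ⟨a, rfl⟩
    · rintro ⟨a, ha, hae⟩
      exact hI (Ideal.eq_top_of_isUnit_mem I ha (hassoc a hae))
    · rintro a b ⟨a', ha', hae⟩ ⟨b', hb', hbe⟩
      obtain ⟨c, hc, hce, _⟩ := hst.inter_eq a' b'
      refine ⟨c, ?_, by rw [← hce, hae, hbe]⟩
      exact Ideal.span_le.mpr (by
        rintro x (rfl | rfl)
        · exact ha'
        · exact hb') hc
    · rintro a c ⟨a', ha', hae⟩ hsub
      refine ⟨a' * c, I.mul_mem_right c ha', ?_⟩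
      rw [hst.map_mul]
      exact Set.union_eq_self_of_subset_left (hae ▸ hsub)
  · intro 𝔉 h𝔉
    obtain ⟨s, hs⟩ := h𝔉.nonempty
    obtain ⟨a₀, rfl⟩ := h𝔉.subset_range hs
    have h0 : ψ (0 : A) ∈ 𝔉 := by
      refine h𝔉.superset_mem a₀ 0 hs ?_
      rw [(hst.eq_univ_iff 0).mpr rfl]
      exact Set.subset_univ _
    refine ⟨{ carrier := {a : A | ψ a ∈ 𝔉}
              zero_mem' := h0
              add_mem' := ?_
              smul_mem' := ?_ }, ?_, rfl⟩
    · intro a b ha hb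
      obtain ⟨c, _, hce, hsub⟩ := hst.inter_eq a b
      exact h𝔉.superset_mem c _ (hce ▸ h𝔉.inter_mem a b ha hb) hsub
    · intro r a ha
      refine h𝔉.superset_mem a (r * a) ha ?_
      rw [hst.map_mul]; exact Set.subset_union_right
    · intro htop
      rw [Ideal.eq_top_iff_one] at htop
      exact h𝔉.empty_not_mem (hst.map_one ▸ htop)
end

section
/- Let ψ : A → Set Λ be an associated semi-transition map on a commutative ring A. Then: (a) if M is a maximal ideal of A, then ψ[M] = {ψ(a) | a ∈ M} is a ψ-ultrafilter on Λ; (b) if 𝔄 is a ψ-ultrafilter on Λ, then ψ⁻¹[𝔄] = {a ∈ A | ψ(a) ∈ 𝔄} is a maximal ideal of A; moreover, the map M ↦ ψ[M] is a bijection from the set of maximal ideals of A onto the set of ψ-ultrafilters on Λ. -/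
/-- A `ψ`-ultrafilter: a `ψ`-filter maximal with respect to inclusion. -/
def IsPsiUltrafilter {A : Type*} [CommRing A] {Λ : Type*} (ψ : A → Set Λ)
    (𝔉 : Set (Set Λ)) : Prop :=
  IsPsiFilter ψ 𝔉 ∧ ∀ 𝔊 : Set (Set Λ), IsPsiFilter ψ 𝔊 → 𝔉 ⊆ 𝔊 → 𝔉 = 𝔊

section Aux
variable {A : Type*} [CommRing A] {Λ : Type*} {ψ : A → Set Λ}

lemma aux_mono (h : IsSemiTransition ψ) (a x : A) : ψ a ⊆ ψ (x * a) := by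
  rw [h.map_mul]; exact Set.subset_union_right

lemma aux_filter (h : IsAssociatedSemiTransition ψ) {M : Ideal A} (hM : M ≠ ⊤) :
    IsPsiFilter ψ (ψ '' (M : Set A)) := by
  constructor
  · exact ⟨ψ 0, ⟨0, M.zero_mem, rfl⟩⟩
  · rintro s ⟨a, -, rfl⟩; exact ⟨a, rfl⟩
  · rintro ⟨a, haM, ha⟩
    exact hM (M.eq_top_of_isUnit_mem haM (h.2 a ha))
  · rintro a b ⟨a', ha'M, ha'⟩ ⟨b', hb'M, hb'⟩
    obtain ⟨c, hc, hcc, -⟩ := h.1.inter_eq a' b'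
    have hcM : c ∈ M := Ideal.span_le.mpr
      (Set.insert_subset_iff.mpr ⟨ha'M, Set.singleton_subset_iff.mpr hb'M⟩) hc
    exact ⟨c, hcM, by rw [← hcc, ha', hb']⟩
  · rintro a c ⟨a', ha'M, ha'⟩ hsub
    refine ⟨c * a', M.mul_mem_left c ha'M, ?_⟩
    rw [h.1.map_mul]
    exact Set.union_eq_self_of_subset_right (ha' ▸ hsub)

lemma aux_mem (h : IsAssociatedSemiTransition ψ) {M : Ideal A} (hM : M.IsMaximal)
    {a m : A} (hm : m ∈ M) (hma : ψ m = ψ a) : a ∈ M := by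
  by_contra ha
  obtain ⟨x, i, hiM, hxi⟩ := hM.exists_inv ha
  obtain ⟨c, -, hcc, hcsub⟩ := h.1.inter_eq i (x * a)
  have h1 : ψ (i + x * a) = ∅ := by
    rw [show i + x * a = 1 by linear_combination hxi, h.1.map_one]
  have hempty : ψ i ∩ ψ (x * a) = ∅ := by
    rw [hcc]; exact Set.subset_eq_empty (h1 ▸ hcsub) rfl
  have hxa : ψ (x * a) = ψ (x * m) := by rw [h.1.map_mul, h.1.map_mul, hma]
  obtain ⟨d, hd, hdd, -⟩ := h.1.inter_eq i (x * m)
  have hdu : IsUnit d := h.2 d (by rw [← hdd, ← hxa, hempty])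
  have hdM : d ∈ M := Ideal.span_le.mpr
    (Set.insert_subset_iff.mpr ⟨hiM, Set.singleton_subset_iff.mpr (M.mul_mem_left x hm)⟩) hd
  exact hM.ne_top (M.eq_top_of_isUnit_mem hdM hdu)

lemma aux_ultra (h : IsAssociatedSemiTransition ψ) {M : Ideal A} (hM : M.IsMaximal) :
    IsPsiUltrafilter ψ (ψ '' (M : Set A)) := by
  refine ⟨aux_filter h hM.ne_top, fun 𝔊 h𝔊 hsub => Set.Subset.antisymm hsub ?_⟩
  intro s hs
  obtain ⟨c, rfl⟩ := h𝔊.subset_range hs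
  refine ⟨c, ?_, rfl⟩
  by_contra hc
  obtain ⟨x, i, hiM, hxi⟩ := hM.exists_inv hc
  obtain ⟨d, -, hdd, hdsub⟩ := h.1.inter_eq i (x * c)
  have h1 : ψ (i + x * c) = ∅ := by
    rw [show i + x * c = 1 by linear_combination hxi, h.1.map_one]
  have hempty : ψ i ∩ ψ (x * c) = ∅ := by
    rw [hdd]; exact Set.subset_eq_empty (h1 ▸ hdsub) rfl
  have hi𝔊 : ψ i ∈ 𝔊 := hsub ⟨i, hiM, rfl⟩
  have hxc𝔊 : ψ (x * c) ∈ 𝔊 := h𝔊.superset_mem c (x * c) hs (aux_mono h.1 c x)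
  exact h𝔊.empty_not_mem (hempty ▸ h𝔊.inter_mem i (x * c) hi𝔊 hxc𝔊)

lemma aux_inv (h : IsAssociatedSemiTransition ψ) {𝔄 : Set (Set Λ)}
    (h𝔄 : IsPsiUltrafilter ψ 𝔄) :
    ∃ M : Ideal A, M.IsMaximal ∧ (M : Set A) = {a : A | ψ a ∈ 𝔄} ∧
      ψ '' (M : Set A) = 𝔄 := by
  obtain ⟨hF, hmax⟩ := h𝔄
  have h0 : ψ (0 : A) = Set.univ := (h.1.eq_univ_iff 0).mpr rfl
  set P : Ideal A :=
    { carrier := {a : A | ψ a ∈ 𝔄}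
      zero_mem' := by
        obtain ⟨s, hs⟩ := hF.nonempty
        obtain ⟨a, rfl⟩ := hF.subset_range hs
        exact hF.superset_mem a 0 hs (by rw [h0]; exact Set.subset_univ _)
      add_mem' := by
        intro a b ha hb
        obtain ⟨c, -, hcc, hcsub⟩ := h.1.inter_eq a b
        exact hF.superset_mem c (a + b) (hcc ▸ hF.inter_mem a b ha hb) hcsub
      smul_mem' := by
        intro x a ha
        simpa [smul_eq_mul] using hF.superset_mem a (x * a) ha (aux_mono h.1 a x) } with hP
  have hPne : P ≠ ⊤ := by
    intro htop
    have h1P : (1 : A) ∈ P := htop ▸ Submodule.mem_top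
    exact hF.empty_not_mem (h.1.map_one ▸ h1P)
  obtain ⟨M, hMmax, hPM⟩ := Ideal.exists_le_maximal P hPne
  have hsub : 𝔄 ⊆ ψ '' (M : Set A) := by
    intro s hs
    obtain ⟨a, rfl⟩ := hF.subset_range hs
    exact ⟨a, hPM hs, rfl⟩
  have heq : 𝔄 = ψ '' (M : Set A) := hmax _ (aux_filter h hMmax.ne_top) hsub
  have hMP : (M : Set A) = {a : A | ψ a ∈ 𝔄} := by
    apply Set.Subset.antisymm
    · intro a haM
      show ψ a ∈ 𝔄
      rw [heq]; exact ⟨a, haM, rfl⟩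
    · exact hPM
  exact ⟨M, hMmax, hMP, heq.symm⟩

end Aux

/-- Theorem: for an associated semi-transition map `ψ` on `A`:
(a) if `M` is a maximal ideal of `A`, then `ψ[M]` is a `ψ`-ultrafilter on `Λ`;
(b) if `𝔄` is a `ψ`-ultrafilter on `Λ`, then `{a | ψ a ∈ 𝔄}` is a maximal ideal;
moreover `M ↦ ψ[M]` is a bijection from the maximal ideals of `A` onto the
`ψ`-ultrafilters on `Λ`. -/
theorem psiUltrafilter_maximal_correspondence {A : Type*} [CommRing A] {Λ : Type*}
    (ψ : A → Set Λ) (hψ : IsAssociatedSemiTransition ψ) :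
    (∀ M : Ideal A, M.IsMaximal → IsPsiUltrafilter ψ (ψ '' (M : Set A))) ∧
    (∀ 𝔄 : Set (Set Λ), IsPsiUltrafilter ψ 𝔄 →
      ∃ M : Ideal A, M.IsMaximal ∧ (M : Set A) = {a : A | ψ a ∈ 𝔄}) ∧
    ∃ e : {M : Ideal A // M.IsMaximal} ≃ {𝔄 : Set (Set Λ) // IsPsiUltrafilter ψ 𝔄},
      ∀ M : {M : Ideal A // M.IsMaximal}, (e M : Set (Set Λ)) = ψ '' (M.1 : Set A) := by
  refine ⟨fun M hM => aux_ultra hψ hM,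
    fun 𝔄 h𝔄 => (aux_inv hψ h𝔄).imp (fun M hM => ⟨hM.1, hM.2.1⟩), ?_⟩
  have hbij : Function.Bijective
      (fun M : {M : Ideal A // M.IsMaximal} =>
        (⟨ψ '' (M.1 : Set A), aux_ultra hψ M.2⟩ :
          {𝔄 : Set (Set Λ) // IsPsiUltrafilter ψ 𝔄})) := by
    constructor
    · rintro ⟨M, hM⟩ ⟨N, hN⟩ hMN
      simp only [Subtype.mk.injEq] at hMN ⊢
      apply le_antisymm
      · intro a haM
        obtain ⟨m, hmN, hma⟩ : ψ a ∈ ψ '' (N : Set A) := hMN ▸ ⟨a, haM, rfl⟩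
        exact aux_mem hψ hN hmN hma
      · intro a haN
        obtain ⟨m, hmM, hma⟩ : ψ a ∈ ψ '' (M : Set A) := hMN.symm ▸ ⟨a, haN, rfl⟩
        exact aux_mem hψ hM hmM hma
    · rintro ⟨𝔄, h𝔄⟩
      obtain ⟨M, hMmax, -, heq⟩ := aux_inv hψ h𝔄
      exact ⟨⟨M, hMmax⟩, Subtype.ext heq⟩
  exact ⟨Equiv.ofBijective _ hbij, fun M => rfl⟩
end

section
/- Let ψ : A → Set Λ be an associated semi-transition map on a commutative ring A. Then: (a) if M is a maximal ideal of A and a ∈ A is such that ψ(a) ∩ ψ(m) ≠ ∅ for every m ∈ M, then a ∈ M; (b) if 𝔄 is a ψ-ultrafilter on Λ and a ∈ A is such that ψ(a) meets every member of 𝔄, then ψ(a) ∈ 𝔄. -/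
/-- Theorem: for an associated semi-transition map `ψ` on `A`:
(a) if `M` is maximal and `ψ a` meets every member of `ψ[M]`, then `a ∈ M`;
(b) if `𝔄` is a `ψ`-ultrafilter and `ψ a` meets every member of `𝔄`, then `ψ a ∈ 𝔄`. -/
theorem psi_meets_every_member {A : Type*} [CommRing A] {Λ : Type*}
    (ψ : A → Set Λ) (hψ : IsAssociatedSemiTransition ψ) :
    (∀ M : Ideal A, M.IsMaximal → ∀ a : A,
      (∀ m ∈ M, (ψ a ∩ ψ m).Nonempty) → a ∈ M) ∧
    (∀ 𝔄 : Set (Set Λ), IsPsiUltrafilter ψ 𝔄 → ∀ a : A,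
      (∀ s ∈ 𝔄, (ψ a ∩ s).Nonempty) → ψ a ∈ 𝔄) := by

  obtain ⟨hst, _⟩ := hψ
  constructor
  · intro M hM a ha
    by_contra haM
    obtain ⟨z, i, hi, hzi⟩ := hM.exists_inv haM
    obtain ⟨c, _, hc1, hc2⟩ := hst.inter_eq (z * a) i
    rw [hzi] at hc2
    rw [hst.map_one] at hc2
    have hsub : ψ a ∩ ψ i ⊆ ψ (z * a) ∩ ψ i := by
      rw [hst.map_mul]
      exact Set.inter_subset_inter_left _ (Set.subset_union_right)
    obtain ⟨x, hx⟩ := ha i hi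
    exact hc2 (hc1 ▸ hsub hx)
  · intro 𝔄 h𝔄 a ha
    obtain ⟨hF, hmax⟩ := h𝔄
    set 𝔊 : Set (Set Λ) := { S | ∃ c : A, S = ψ c ∧ ∃ b : A, ψ b ∈ 𝔄 ∧ ψ a ∩ ψ b ⊆ ψ c } with h𝔊
    have hsub : 𝔄 ⊆ 𝔊 := by
      intro S hS
      obtain ⟨b, rfl⟩ := hF.subset_range hS
      exact ⟨b, rfl, b, hS, Set.inter_subset_right⟩
    have hGF : IsPsiFilter ψ 𝔊 := by
      constructor
      · exact hF.nonempty.mono hsub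
      · rintro S ⟨c, rfl, -⟩
        exact ⟨c, rfl⟩
      · rintro ⟨c, hc, b, hb, hcb⟩
        rw [← hc] at hcb
        obtain ⟨x, hx⟩ := ha (ψ b) hb
        exact hcb hx
      · rintro a1 a2 ⟨c1, hc1, b1, hb1, hab1⟩ ⟨c2, hc2, b2, hb2, hab2⟩
        obtain ⟨d, _, hd1, _⟩ := hst.inter_eq b1 b2
        obtain ⟨e, _, he1, _⟩ := hst.inter_eq a1 a2
        refine ⟨e, he1, d, ?_, ?_⟩
        · rw [← hd1]; exact hF.inter_mem b1 b2 hb1 hb2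
        · rw [← he1, ← hd1]
          intro x hx
          exact ⟨hc1.ge (hab1 ⟨hx.1, hx.2.1⟩), hc2.ge (hab2 ⟨hx.1, hx.2.2⟩)⟩
      · rintro b c ⟨c', hc', b', hb', hab'⟩ hbc
        exact ⟨c, rfl, b', hb', hab'.trans (hc'.ge.trans hbc)⟩
    have heq := hmax 𝔊 hGF hsub
    rw [heq]
    obtain ⟨S, hS⟩ := hF.nonempty
    obtain ⟨b, rfl⟩ := hF.subset_range hS
    exact ⟨a, rfl, b, hS, Set.inter_subset_left⟩
end

section
/- Let ψ : A → Set Λ be an associated semi-transition map on a commutative ring A, and let I be a proper ψ-ideal of A. Then the following are equivalent: (a) I is semi-strongly irreducible (for all ideals J, K of A, J ∩ K ⊆ I implies J² ⊆ I or K² ⊆ I); (b) I is strongly irreducible (for all ideals J, K of A, J ∩ K ⊆ I implies J ⊆ I or K ⊆ I); (c) I is a prime ideal. -/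
/-- A `ψ`-ideal: an ideal `I` such that whenever `ψ a = ψ b` for some `b ∈ I`,
then `a ∈ I`. -/
def IsPsiIdeal {A : Type*} [CommRing A] {Λ : Type*} (ψ : A → Set Λ) (I : Ideal A) : Prop :=
  ∀ a b : A, b ∈ I → ψ a = ψ b → a ∈ I

/-- Theorem: for a proper `ψ`-ideal `I` of `A` (with `ψ` an associated
semi-transition map), the following are equivalent:
(a) `I` is semi-strongly irreducible; (b) `I` is strongly irreducible;
(c) `I` is prime. -/
theorem psiIdeal_irreducible_tfae {A : Type*} [CommRing A] {Λ : Type*}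
    (ψ : A → Set Λ) (hψ : IsAssociatedSemiTransition ψ)
    (I : Ideal A) (hI : I ≠ ⊤) (hpsi : IsPsiIdeal ψ I) :
    ((∀ J K : Ideal A, J ⊓ K ≤ I → J * J ≤ I ∨ K * K ≤ I) ↔
      (∀ J K : Ideal A, J ⊓ K ≤ I → J ≤ I ∨ K ≤ I)) ∧
    ((∀ J K : Ideal A, J ⊓ K ≤ I → J ≤ I ∨ K ≤ I) ↔ I.IsPrime) := by
  obtain ⟨hst, -⟩ := hψ
  have sq : ∀ x : A, x * x ∈ I → x ∈ I := fun x hx =>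
    hpsi x (x * x) hx (by rw [hst.map_mul, Set.union_self])
  have sqI : ∀ J : Ideal A, J * J ≤ I → J ≤ I := fun J hJ x hx =>
    sq x (hJ (Ideal.mul_mem_mul hx hx))
  constructor
  · constructor
    · intro h J K hJK
      rcases h J K hJK with h' | h'
      · exact Or.inl (sqI J h')
      · exact Or.inr (sqI K h')
    · intro h J K hJK
      rcases h J K hJK with h' | h'
      · exact Or.inl (le_trans Ideal.mul_le_left h')
      · exact Or.inr (le_trans Ideal.mul_le_left h')
  · constructor
    · intro h
      refine ⟨hI, ?_⟩
      intro a b hab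
      have h1 : (Ideal.span {a} ⊓ Ideal.span {b}) * (Ideal.span {a} ⊓ Ideal.span {b}) ≤ I := by
        calc (Ideal.span {a} ⊓ Ideal.span {b}) * (Ideal.span {a} ⊓ Ideal.span {b})
            ≤ Ideal.span {a} * Ideal.span {b} := Ideal.mul_mono inf_le_left inf_le_right
          _ = Ideal.span {a * b} := Ideal.span_singleton_mul_span_singleton a b
          _ ≤ I := (Ideal.span_singleton_le_iff_mem I).2 hab
      rcases h _ _ (sqI _ h1) with h' | h'
      · exact Or.inl (h' (Ideal.mem_span_singleton_self a))
      · exact Or.inr (h' (Ideal.mem_span_singleton_self b))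
    · intro hp J K hJK
      exact (Ideal.IsPrime.mul_le hp).1 (le_trans Ideal.mul_le_inf hJK)
end

section
/- Let ψ : A → Set Λ be an associated semi-transition map on a commutative ring A. Then: (a) if P is a prime ψ-ideal of A, the family ψ[P] = {ψ(a) | a ∈ P} is a prime ψ-filter on Λ; (b) if 𝔉 is a prime ψ-filter on Λ, then ψ⁻¹[𝔉] = {a ∈ A | ψ(a) ∈ 𝔉} is a prime ψ-ideal of A. -/
/-- A prime `ψ`-filter: a `ψ`-filter `𝔉` such that `ψ a ∪ ψ b ∈ 𝔉` implies
`ψ a ∈ 𝔉` or `ψ b ∈ 𝔉`. -/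
def IsPrimePsiFilter {A : Type*} [CommRing A] {Λ : Type*} (ψ : A → Set Λ)
    (𝔉 : Set (Set Λ)) : Prop :=
  IsPsiFilter ψ 𝔉 ∧ ∀ a b : A, ψ a ∪ ψ b ∈ 𝔉 → ψ a ∈ 𝔉 ∨ ψ b ∈ 𝔉

/-- Theorem: for an associated semi-transition map `ψ` on `A`:
(a) if `P` is a prime `ψ`-ideal, then `ψ[P]` is a prime `ψ`-filter;
(b) if `𝔉` is a prime `ψ`-filter, then `{a | ψ a ∈ 𝔉}` is a prime `ψ`-ideal. -/
theorem primePsiFilter_correspondence {A : Type*} [CommRing A] {Λ : Type*}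
    (ψ : A → Set Λ) (hψ : IsAssociatedSemiTransition ψ) :
    (∀ P : Ideal A, P.IsPrime → IsPsiIdeal ψ P →
      IsPrimePsiFilter ψ (ψ '' (P : Set A))) ∧
    (∀ 𝔉 : Set (Set Λ), IsPrimePsiFilter ψ 𝔉 →
      ∃ P : Ideal A, P.IsPrime ∧ IsPsiIdeal ψ P ∧ (P : Set A) = {a : A | ψ a ∈ 𝔉}) := by
  obtain ⟨hst, hassoc⟩ := hψ
  constructor
  · intro P hP hPψ
    -- members of the image come from P via the ψ-ideal property
    have mem_of : ∀ a : A, ψ a ∈ ψ '' (P : Set A) → a ∈ P := by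
      rintro a ⟨b, hb, hba⟩
      exact hPψ a b hb hba.symm
    refine ⟨⟨⟨ψ 0, ⟨0, P.zero_mem, rfl⟩⟩, ?_, ?_, ?_, ?_⟩, ?_⟩
    · rintro s ⟨b, _, rfl⟩; exact ⟨b, rfl⟩
    · rintro ⟨b, hb, hbe⟩
      exact hP.ne_top (P.eq_top_of_isUnit_mem hb (hassoc b hbe))
    · intro a b ha hb
      have haP := mem_of a ha
      have hbP := mem_of b hb
      obtain ⟨c, hc, hceq, _⟩ := hst.inter_eq a b
      have hcP : c ∈ P := by
        refine Ideal.span_le.mpr ?_ hc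
        rw [Set.insert_subset_iff, Set.singleton_subset_iff]
        exact ⟨haP, hbP⟩
      exact ⟨c, hcP, hceq.symm⟩
    · intro a c ha hac
      have haP := mem_of a ha
      refine ⟨a * c, P.mul_mem_right c haP, ?_⟩
      rw [hst.map_mul]
      exact Set.union_eq_self_of_subset_left hac
    · intro a b hab
      rw [← hst.map_mul] at hab
      have := mem_of _ hab
      rcases hP.mem_or_mem this with h | h
      · exact Or.inl ⟨a, h, rfl⟩
      · exact Or.inr ⟨b, h, rfl⟩
  · intro 𝔉 h𝔉
    obtain ⟨hF, hFprime⟩ := h𝔉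
    have hzero : ψ (0 : A) ∈ 𝔉 := by
      obtain ⟨s, hs⟩ := hF.nonempty
      obtain ⟨a, rfl⟩ := hF.subset_range hs
      exact hF.superset_mem a 0 hs (by
        rw [(hst.eq_univ_iff 0).mpr rfl]; exact Set.subset_univ _)
    refine ⟨⟨⟨⟨setOf (fun a => ψ a ∈ 𝔉), ?_⟩, hzero⟩, ?_⟩, ?_, ?_, rfl⟩
    · intro a b ha hb
      obtain ⟨c, _, hceq, hcsub⟩ := hst.inter_eq a b
      have hc : ψ c ∈ 𝔉 := hceq ▸ hF.inter_mem a b ha hb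
      exact hF.superset_mem c (a + b) hc hcsub
    · intro r a ha
      show ψ (r * a) ∈ 𝔉
      refine hF.superset_mem a (r * a) ha ?_
      rw [hst.map_mul]; exact Set.subset_union_right
    · constructor
      · intro htop
        have h1 : ψ (1 : A) ∈ 𝔉 := by
          have := htop ▸ (Submodule.mem_top : (1 : A) ∈ (⊤ : Ideal A))
          exact this
        rw [hst.map_one] at h1
        exact hF.empty_not_mem h1
      · intro a b hab
        have : ψ a ∪ ψ b ∈ 𝔉 := by rw [← hst.map_mul]; exact hab
        exact hFprime a b this
    · intro a b hb hab
      show ψ a ∈ 𝔉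
      rw [hab]; exact hb
end

section
/- Let ψ : A → Set Λ be an associated semi-transition map on a commutative ring A, and suppose A is an n-th root ring for some fixed integer n ≥ 2 (i.e. every element of A has an n-th root in A). Then for all ψ-ideals I and J of A, the ideal product I·J equals the intersection I ∩ J. -/
/-- Theorem: if `A` (carrying an associated semi-transition map `ψ`) is an `n`-th
root ring for some fixed `n ≥ 2`, then `I * J = I ⊓ J` for all `ψ`-ideals `I, J`. -/
theorem psiIdeal_mul_eq_inf {A : Type*} [CommRing A] {Λ : Type*}
    (ψ : A → Set Λ) (hψ : IsAssociatedSemiTransition ψ)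
    (n : ℕ) (hn : 2 ≤ n) (hroot : ∀ a : A, ∃ b : A, b ^ n = a)
    (I J : Ideal A) (hI : IsPsiIdeal ψ I) (hJ : IsPsiIdeal ψ J) :
    I * J = I ⊓ J := by
  have hpow : ∀ (b : A) (k : ℕ), 0 < k → ψ (b ^ k) = ψ b := by
    intro b k hk
    induction k with
    | zero => omega
    | succ m ih =>
      rcases Nat.eq_zero_or_pos m with hm | hm
      · subst hm; simp
      · rw [pow_succ, hψ.1.map_mul, ih hm, Set.union_self]
  refine le_antisymm Ideal.mul_le_inf ?_
  intro a ha
  obtain ⟨b, hb⟩ := hroot a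
  have hψab : ψ b = ψ a := by rw [← hb, hpow b n (by omega)]
  have hbI : b ∈ I := hI b a ha.1 hψab
  have hbJ : b ∈ J := hJ b a ha.2 hψab
  have : b ^ (n - 2) * b * b ∈ I * J := by
    exact Ideal.mul_mem_mul (I.mul_mem_left _ hbI) hbJ
  have heq : b ^ (n - 2) * b * b = a := by
    rw [← hb]
    rw [mul_assoc, ← pow_two, ← pow_add]
    congr 1
    omega
  rwa [heq] at this
end

section
/- Let ψ : A → Set Λ be a transition map on a commutative ring A (so A is a transitional ring), and let S = {a ∈ A | ψ(a) = ∅}. Then the localization A_S = S⁻¹A is also a transitional ring: A_S is a pm-ring and the induced map φ : A_S → Set Λ, φ(a/t) = ψ(a), is a transition map on A_S. -/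
/-- A transition map: a semi-transition map on a pm-ring which separates points of
`Λ` and admits complementary disjoint sets. -/
structure IsTransition {A : Type*} [CommRing A] {Λ : Type*} (ψ : A → Set Λ) : Prop where
  pm : IsPMRing A
  semi : IsSemiTransition ψ
  separates : ∀ l₁ l₂ : Λ, l₁ ≠ l₂ → ∃ a : A,
    (l₁ ∈ ψ a ∧ l₂ ∉ ψ a) ∨ (l₂ ∈ ψ a ∧ l₁ ∉ ψ a)
  disjoint : ∀ (l : Λ) (a : A), l ∉ ψ a → ∃ b : A, l ∈ ψ b ∧ ψ a ∩ ψ b = ∅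

section Helpers

variable {A : Type*} [CommRing A] {Λ : Type*} {ψ : A → Set Λ}

lemma IsSemiTransition.psi_zero (h : IsSemiTransition ψ) : ψ 0 = Set.univ :=
  (h.eq_univ_iff 0).mpr rfl

lemma IsSemiTransition.psi_pow (h : IsSemiTransition ψ) (a : A) :
    ∀ m : ℕ, 0 < m → ψ (a ^ m) = ψ a := by
  intro m hm
  induction m with
  | zero => omega
  | succ n ih =>
    rcases Nat.eq_zero_or_pos n with h0 | hp
    · subst h0; simp
    · rw [pow_succ, h.map_mul, ih hp, Set.union_self]

/-- Key splitting lemma: if `ψ a` and `ψ b` are disjoint, there are `d, e, f` with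
`ψ d = ∅`, `a ^ m = d * e`, `b ^ n = d * f` and `α * e + β * f = 1`. -/
lemma IsSemiTransition.split (h : IsSemiTransition ψ) {a b : A} (hab : ψ a ∩ ψ b = ∅) :
    ∃ (d e f α β : A) (m n : ℕ), 0 < m ∧ 0 < n ∧ ψ d = ∅ ∧
      a ^ m = d * e ∧ b ^ n = d * f ∧ α * e + β * f = 1 := by
  obtain ⟨m, n, hm, hn, hP⟩ := h.principal a b hab
  obtain ⟨d, hd⟩ := hP.principal
  have hma : a ^ m ∈ Ideal.span ({a ^ m, b ^ n} : Set A) :=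
    Ideal.subset_span (Set.mem_insert _ _)
  have hmb : b ^ n ∈ Ideal.span ({a ^ m, b ^ n} : Set A) :=
    Ideal.subset_span (Set.mem_insert_of_mem _ rfl)
  rw [hd] at hma hmb
  obtain ⟨e, he⟩ := Ideal.mem_span_singleton.mp hma
  obtain ⟨f, hf⟩ := Ideal.mem_span_singleton.mp hmb
  have hdmem : d ∈ Ideal.span ({a ^ m, b ^ n} : Set A) := by
    rw [hd]; exact Ideal.mem_span_singleton_self d
  obtain ⟨α, β, hαβ⟩ := Ideal.mem_span_pair.mp hdmem
  have hda : ψ d ⊆ ψ a := by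
    rw [← h.psi_pow a m hm, he, h.map_mul]; exact Set.subset_union_left
  have hdb : ψ d ⊆ ψ b := by
    rw [← h.psi_pow b n hn, hf, h.map_mul]; exact Set.subset_union_left
  have hdempty : ψ d = ∅ :=
    Set.subset_empty_iff.mp (hab ▸ Set.subset_inter hda hdb)
  have hdz : d * (1 - (α * e + β * f)) = 0 := by
    rw [he, hf] at hαβ; linear_combination -hαβ
  have hzuniv : ψ (1 - (α * e + β * f)) = Set.univ := by
    have h2 := h.map_mul d (1 - (α * e + β * f))
    rw [hdz, h.psi_zero, hdempty, Set.empty_union] at h2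
    exact h2.symm
  have hz : (1 : A) - (α * e + β * f) = 0 := (h.eq_univ_iff _).mp hzuniv
  exact ⟨d, e, f, α, β, m, n, hm, hn, hdempty, he, hf, by linear_combination -hz⟩

end Helpers

/-- Theorem: if `ψ` is a transition map on `A` and `S = {a | ψ a = ∅}`, then the
localization `A_S` is again a transitional ring: it is a pm-ring and the induced
map `φ (a / t) = ψ a` is a transition map on `A_S`. -/
theorem localization_transition {A : Type*} [CommRing A] {Λ : Type*}
    (ψ : A → Set Λ) (hψ : IsTransition ψ)
    (S : Submonoid A) (hS : (S : Set A) = {a : A | ψ a = ∅}) :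
    ∃ φ : Localization S → Set Λ,
      (∀ (a : A) (t : S), φ (Localization.mk a t) = ψ a) ∧ IsTransition φ := by
  classical
  have hsemi := hψ.semi
  have hSpsi : ∀ t : S, ψ (t : A) = ∅ := by
    intro t
    have h : (t : A) ∈ (S : Set A) := t.2
    rw [hS] at h; exact h
  have mem_S : ∀ a : A, ψ a = ∅ → a ∈ S := by
    intro a ha
    have : a ∈ (S : Set A) := by rw [hS]; exact ha
    exact this
  have cancel : ∀ (t : S) (a : A), ψ ((t : A) * a) = ψ a := by
    intro t a; rw [hsemi.map_mul, hSpsi, Set.empty_union]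
  -- the induced map
  have wd : ∀ {a c : A} {b d : S}, Localization.r S (a, b) (c, d) → ψ a = ψ c := by
    intro a c b d hr
    obtain ⟨e, he⟩ := Localization.r_iff_exists.mp hr
    simp only at he
    have h1 : ψ ((e : A) * ((d : A) * a)) = ψ a := by
      rw [hsemi.map_mul, hsemi.map_mul, hSpsi, hSpsi]; simp
    have h2 : ψ ((e : A) * ((b : A) * c)) = ψ c := by
      rw [hsemi.map_mul, hsemi.map_mul, hSpsi, hSpsi]; simp
    rw [← h1, he, h2]
  refine ⟨fun x => Localization.liftOn x (fun a _ => ψ a) (fun hr => wd hr), fun a t => rfl, ?_⟩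
  set φ : Localization S → Set Λ :=
    fun x => Localization.liftOn x (fun a _ => ψ a) (fun hr => wd hr) with hφdef
  have hφ : ∀ (a : A) (t : S), φ (Localization.mk a t) = ψ a := fun a t => rfl
  have rep : ∀ x : Localization S, ∃ (a : A) (t : S), x = Localization.mk a t := fun x =>
    Localization.induction_on x fun y => ⟨y.1, y.2, rfl⟩
  set g : A →+* Localization S := algebraMap A (Localization S) with hg
  have fmul : ∀ (t : S) (a : A), g (t : A) * Localization.mk a t = g a := by
    intro t a
    rw [hg, ← Localization.mk_one_eq_algebraMap, ← Localization.mk_one_eq_algebraMap,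
      Localization.mk_mul, Localization.mk_eq_mk_iff, Localization.r_iff_exists]
    exact ⟨1, by push_cast; ring⟩
  have hunit : ∀ {s : A}, ψ s = ∅ → ∀ {N : Ideal (Localization S)}, N ≠ ⊤ → g s ∉ N := by
    intro s hs N hN hmem
    exact hN (N.eq_top_of_isUnit_mem hmem
      (IsLocalization.map_units (Localization S) ⟨s, mem_S s hs⟩))
  -- pm-ness of the localization
  have pmloc : IsPMRing (Localization S) := by
    intro Q hQ
    haveI := hQ
    obtain ⟨M, hM, hMuniq⟩ := hψ.pm (Q.comap g) inferInstance
    have key : ∀ N : Ideal (Localization S), N.IsMaximal → Q ≤ N → Ideal.comap g N ≤ M := by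
      intro N hNmax hQN
      have hPtop : Ideal.comap g N ≠ ⊤ := by
        intro h
        have h1 : (1 : A) ∈ Ideal.comap g N := h ▸ trivial
        have h2 : (1 : Localization S) ∈ N := by simpa using h1
        exact hNmax.ne_top (Ideal.eq_top_iff_one N |>.mpr h2)
      obtain ⟨M₁, hM₁, hPM₁⟩ := Ideal.exists_le_maximal _ hPtop
      have : M₁ = M := hMuniq M₁ ⟨hM₁, le_trans (Ideal.comap_mono hQN) hPM₁⟩
      exact this ▸ hPM₁
    have uniq2 : ∀ N₁ N₂ : Ideal (Localization S), N₁.IsMaximal → N₂.IsMaximal →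
        Q ≤ N₁ → Q ≤ N₂ → N₁ = N₂ := by
      intro N₁ N₂ h₁ h₂ hQ₁ hQ₂
      by_contra hne
      have hle : ¬N₁ ≤ N₂ := fun h => hne (h₁.eq_of_le h₂.ne_top h)
      obtain ⟨ξ, hξ1, hξ2⟩ := SetLike.not_le_iff_exists.mp hle
      obtain ⟨z, ν, hν, hzν⟩ := h₂.exists_inv hξ2
      have hξ' : z * ξ ∈ N₁ := Ideal.mul_mem_left _ _ hξ1
      obtain ⟨x, t, hx⟩ := rep (z * ξ)
      obtain ⟨p, u, hp⟩ := rep ν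
      have heq : Localization.mk x t + Localization.mk p u = 1 := by
        rw [← hx, ← hp]; exact hzν
      rw [Localization.add_mk, ← Localization.mk_one, Localization.mk_eq_mk_iff,
        Localization.r_iff_exists] at heq
      obtain ⟨c, hc⟩ := heq
      simp only at hc
      push_cast at hc
      set a : A := (c : A) * ((u : A) * x) with hadef
      set b : A := (c : A) * ((t : A) * p) with hbdef
      have keysum : a + b = (c : A) * ((t : A) * (u : A)) := by
        rw [hadef, hbdef]; linear_combination hc
      have hs₀ : ψ (a + b) = ∅ := by
        rw [keysum, hsemi.map_mul, hsemi.map_mul, hSpsi, hSpsi, hSpsi]; simp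
      have hab : ψ a ∩ ψ b = ∅ := by
        obtain ⟨c', _, hceq, hcsub⟩ := hsemi.inter_eq a b
        rw [hceq]
        exact Set.subset_empty_iff.mp (hs₀ ▸ hcsub)
      obtain ⟨d, e, w, α, β, m, n, hm, hn, hdempty, hae, hbw, hsum⟩ := hsemi.split hab
      -- g x ∈ N₁, g p ∈ N₂
      have hxN : g x ∈ N₁ := by
        rw [← fmul t x, ← hx]; exact Ideal.mul_mem_left _ _ hξ'
      have hpN : g p ∈ N₂ := by
        rw [← fmul u p, ← hp]; exact Ideal.mul_mem_left _ _ hν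
      have haN : g a ∈ N₁ := by
        rw [hadef, map_mul, map_mul]
        exact Ideal.mul_mem_left _ _ (Ideal.mul_mem_left _ _ hxN)
      have hbN : g b ∈ N₂ := by
        rw [hbdef, map_mul, map_mul]
        exact Ideal.mul_mem_left _ _ (Ideal.mul_mem_left _ _ hpN)
      have heN : g e ∈ N₁ := by
        have hde : g d * g e ∈ N₁ := by
          rw [← map_mul, ← hae, map_pow]
          exact Ideal.pow_mem_of_mem N₁ haN m hm
        exact (h₁.isPrime.mem_or_mem hde).resolve_left (hunit hdempty h₁.ne_top)
      have hwN : g w ∈ N₂ := by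
        have hdw : g d * g w ∈ N₂ := by
          rw [← map_mul, ← hbw, map_pow]
          exact Ideal.pow_mem_of_mem N₂ hbN n hn
        exact (h₂.isPrime.mem_or_mem hdw).resolve_left (hunit hdempty h₂.ne_top)
      have heM : e ∈ M := key N₁ h₁ hQ₁ heN
      have hwM : w ∈ M := key N₂ h₂ hQ₂ hwN
      have h1M : (1 : A) ∈ M := by
        rw [← hsum]
        exact M.add_mem (M.mul_mem_left α heM) (M.mul_mem_left β hwM)
      exact hM.1.ne_top ((Ideal.eq_top_iff_one M).mpr h1M)
    obtain ⟨N, hNmax, hQN⟩ := Ideal.exists_le_maximal Q hQ.ne_top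
    exact ⟨N, ⟨hNmax, hQN⟩, fun N' hN' => uniq2 N' N hN'.1 hNmax hN'.2 hQN⟩
  refine ⟨pmloc, ⟨hsemi.nonempty, ?_, ?_, ?_, ?_, ?_⟩, ?_, ?_⟩
  · -- map_mul
    intro x y
    obtain ⟨a, t, rfl⟩ := rep x
    obtain ⟨b, u, rfl⟩ := rep y
    rw [Localization.mk_mul, hφ, hφ, hφ, hsemi.map_mul]
  · -- map_one
    rw [← Localization.mk_one, hφ]; exact hsemi.map_one
  · -- eq_univ_iff
    intro x
    obtain ⟨a, t, rfl⟩ := rep x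
    rw [hφ]
    constructor
    · intro h
      rw [(hsemi.eq_univ_iff a).mp h]
      exact Localization.mk_zero t
    · intro h
      rw [← Localization.mk_zero (1 : S), Localization.mk_eq_mk_iff,
        Localization.r_iff_exists] at h
      obtain ⟨e, he⟩ := h
      simp only at he
      have he' : (e : A) * a = 0 := by push_cast at he; linear_combination he
      have := hsemi.map_mul (e : A) a
      rw [he', hsemi.psi_zero, hSpsi, Set.empty_union] at this
      exact this.symm
  · -- inter_eq
    intro x y
    obtain ⟨a, t, rfl⟩ := rep x
    obtain ⟨b, u, rfl⟩ := rep y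
    obtain ⟨c₀, hc₀mem, hc₀eq, hc₀sub⟩ := hsemi.inter_eq ((u : A) * a) ((t : A) * b)
    refine ⟨Localization.mk c₀ 1, ?_, ?_, ?_⟩
    · -- membership in the span
      have h1 : g c₀ ∈ Ideal.map g (Ideal.span ({(u : A) * a, (t : A) * b} : Set A)) :=
        Ideal.mem_map_of_mem g hc₀mem
      rw [Ideal.map_span, Set.image_pair] at h1
      have h2 : Ideal.span ({g ((u : A) * a), g ((t : A) * b)} : Set (Localization S)) ≤
          Ideal.span {Localization.mk a t, Localization.mk b u} := by
        rw [Ideal.span_le]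
        intro z hz
        simp only [Set.mem_insert_iff, Set.mem_singleton_iff] at hz
        rcases hz with rfl | rfl
        · rw [map_mul, ← fmul t a]
          exact Ideal.mul_mem_left _ _ (Ideal.mul_mem_left _ _
            (Ideal.subset_span (Set.mem_insert _ _)))
        · rw [map_mul, ← fmul u b]
          exact Ideal.mul_mem_left _ _ (Ideal.mul_mem_left _ _
            (Ideal.subset_span (Set.mem_insert_of_mem _ rfl)))
      have := h2 h1
      rwa [hg, ← Localization.mk_one_eq_algebraMap] at this
    · rw [hφ, hφ, hφ, ← cancel u a, ← cancel t b]; exact hc₀eq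
    · rw [Localization.add_mk, hφ, hφ]
      rw [add_comm ((u : A) * a) ((t : A) * b)] at hc₀sub
      exact hc₀sub
  · -- principal
    intro x y hxy
    obtain ⟨a, t, rfl⟩ := rep x
    obtain ⟨b, u, rfl⟩ := rep y
    rw [hφ, hφ] at hxy
    obtain ⟨m, n, hm, hn, hP⟩ := hsemi.principal a b hxy
    obtain ⟨d, hd⟩ := hP.principal
    refine ⟨m, n, hm, hn, ⟨⟨g d, ?_⟩⟩⟩
    have hmap : Ideal.span ({Localization.mk a t ^ m, Localization.mk b u ^ n} :
        Set (Localization S)) = Ideal.map g (Ideal.span ({a ^ m, b ^ n} : Set A)) := by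
      rw [Ideal.map_span, Set.image_pair]
      apply le_antisymm
      · rw [Ideal.span_le]
        intro z hz
        simp only [Set.mem_insert_iff, Set.mem_singleton_iff] at hz
        rcases hz with rfl | rfl
        · rw [Localization.mk_pow]
          have : Localization.mk (a ^ m) (t ^ m) = Localization.mk 1 (t ^ m) * g (a ^ m) := by
            rw [hg, ← Localization.mk_one_eq_algebraMap, Localization.mk_mul, one_mul, mul_one]
          rw [this]
          exact Ideal.mul_mem_left _ _ (Ideal.subset_span (Set.mem_insert _ _))
        · rw [Localization.mk_pow]
          have : Localization.mk (b ^ n) (u ^ n) = Localization.mk 1 (u ^ n) * g (b ^ n) := by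
            rw [hg, ← Localization.mk_one_eq_algebraMap, Localization.mk_mul, one_mul, mul_one]
          rw [this]
          exact Ideal.mul_mem_left _ _ (Ideal.subset_span (Set.mem_insert_of_mem _ rfl))
      · rw [Ideal.span_le]
        intro z hz
        simp only [Set.mem_insert_iff, Set.mem_singleton_iff] at hz
        rcases hz with rfl | rfl
        · rw [← fmul (t ^ m) (a ^ m), ← Localization.mk_pow]
          exact Ideal.mul_mem_left _ _ (Ideal.subset_span (Set.mem_insert _ _))
        · rw [← fmul (u ^ n) (b ^ n), ← Localization.mk_pow]
          exact Ideal.mul_mem_left _ _ (Ideal.subset_span (Set.mem_insert_of_mem _ rfl))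
    rw [hmap, hd]
    show Ideal.map g (Ideal.span ({d} : Set A)) = _
    rw [Ideal.map_span, Set.image_singleton]
  · -- separates
    intro l₁ l₂ hne
    obtain ⟨a, ha⟩ := hψ.separates l₁ l₂ hne
    refine ⟨Localization.mk a 1, ?_⟩
    rw [hφ]
    exact ha
  · -- disjoint
    intro l x hl
    obtain ⟨a, t, rfl⟩ := rep x
    rw [hφ] at hl
    obtain ⟨b, hb1, hb2⟩ := hψ.disjoint l a hl
    exact ⟨Localization.mk b 1, by rw [hφ]; exact hb1, by rw [hφ, hφ]; exact hb2⟩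
end

section
/- Let F be a nonempty index set, and for each α ∈ F let A_α be a commutative pm-ring with a transition map ψ_α : A_α → Set Λ_α (Λ_α nonempty). Suppose there exists a fixed positive integer m such that for every α ∈ F and all a, b ∈ A_α with ψ_α(a) ∩ ψ_α(b) = ∅, the ideal of A_α generated by a^m and b^m is principal. Then the product ring ∏_{α ∈ F} A_α is a transitional ring: it is a pm-ring and the map ψ((a_α)_α) = ⋃_α {⟨α, λ⟩ | λ ∈ ψ_α(a_α)} into subsets of the disjoint union Σ_{α ∈ F} Λ_α is a transition map on it. -/
lemma pm_to_elem {A : Type*} [CommRing A] (h : IsPMRing A) :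
    ∀ a b : A, a + b = 1 → ∃ r s : A, (1 + a*r) * (1 + b*s) = 0 := by
  intro a b hab
  by_contra hc
  push_neg at hc
  let S : Submonoid A :=
  { carrier := {x | ∃ r s, x = (1 + a*r) * (1 + b*s)}
    mul_mem' := by
      rintro x y ⟨r, s, rfl⟩ ⟨r', s', rfl⟩
      exact ⟨r + r' + a*r*r', s + s' + b*s*s', by ring⟩
    one_mem' := ⟨0, 0, by ring⟩ }
  have hdis : Disjoint ((⊥ : Ideal A) : Set A) (S : Set A) := by
    rw [Set.disjoint_left]
    rintro x hx ⟨r, s, rfl⟩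
    rw [SetLike.mem_coe, Ideal.mem_bot] at hx
    exact hc r s hx
  obtain ⟨P, hP, -, hPS⟩ := Ideal.exists_le_prime_disjoint ⊥ S hdis
  have key : ∀ x : A, (P ⊔ Ideal.span {x}) = ⊤ → ∃ t, 1 + x * t ∈ P := by
    intro x hx
    have : (1 : A) ∈ P ⊔ Ideal.span {x} := hx ▸ Submodule.mem_top
    obtain ⟨p, hp, q, hq, hpq⟩ := Submodule.mem_sup.mp this
    obtain ⟨t, rfl⟩ := Ideal.mem_span_singleton'.mp hq
    exact ⟨-t, by
      have h2 : 1 + x * -t = p := by linear_combination -hpq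
      rw [h2]; exact hp⟩
  have ha : P ⊔ Ideal.span {a} ≠ ⊤ := by
    intro hx
    obtain ⟨t, ht⟩ := key a hx
    exact Set.disjoint_left.mp hPS ht ⟨t, 0, by ring⟩
  have hb : P ⊔ Ideal.span {b} ≠ ⊤ := by
    intro hx
    obtain ⟨t, ht⟩ := key b hx
    exact Set.disjoint_left.mp hPS ht ⟨0, t, by ring⟩
  obtain ⟨M, hM, hMle⟩ := Ideal.exists_le_maximal _ ha
  obtain ⟨N, hN, hNle⟩ := Ideal.exists_le_maximal _ hb
  obtain ⟨U, -, hU⟩ := h P hP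
  have hMN : M = N := by
    rw [hU M ⟨hM, le_sup_left.trans hMle⟩, hU N ⟨hN, le_sup_left.trans hNle⟩]
  have haM : a ∈ M := hMle (le_sup_right (α := Ideal A) (Ideal.mem_span_singleton_self a))
  have hbM : b ∈ M := hMN ▸ hNle (le_sup_right (α := Ideal A) (Ideal.mem_span_singleton_self b))
  exact hM.ne_top (Ideal.eq_top_of_isUnit_mem M (hab ▸ M.add_mem haM hbM) isUnit_one)

lemma elem_to_pm {A : Type*} [CommRing A]
    (h : ∀ a b : A, a + b = 1 → ∃ r s : A, (1 + a*r) * (1 + b*s) = 0) : IsPMRing A := by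
  intro P hP
  obtain ⟨M, hM, hPM⟩ := P.exists_le_maximal hP.ne_top
  refine ⟨M, ⟨hM, hPM⟩, ?_⟩
  rintro N ⟨hN, hPN⟩
  by_contra hne
  have hsup : N ⊔ M = ⊤ := hN.coprime_of_ne hM hne
  have : (1 : A) ∈ N ⊔ M := hsup ▸ Submodule.mem_top
  obtain ⟨a, haN, b, hbM, hab⟩ := Submodule.mem_sup.mp this
  obtain ⟨r, s, hrs⟩ := h a b hab
  have : (1 + a*r) * (1 + b*s) ∈ P := hrs ▸ P.zero_mem
  rcases hP.mem_or_mem this with h1 | h1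
  · have : (1 : A) ∈ N := by
      have := N.sub_mem (hPN h1) (N.mul_mem_right r haN)
      simpa using this
    exact hN.ne_top (Ideal.eq_top_of_isUnit_mem N this isUnit_one)
  · have : (1 : A) ∈ M := by
      have := M.sub_mem (hPM h1) (M.mul_mem_right s hbM)
      simpa using this
    exact hM.ne_top (Ideal.eq_top_of_isUnit_mem M this isUnit_one)

/-- Theorem (products of transitional rings): if each pm-ring `A α` carries a
transition map `ψ α` and there is a fixed `m > 0` such that disjointness of
`ψ α a` and `ψ α b` forces `(a^m, b^m)` to be principal, then the product ring
`∏ α, A α` is a transitional ring, with transition map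
`ψ ((a_α)_α) = {⟨α, λ⟩ | λ ∈ ψ α (a α)}` into subsets of `Σ α, Λ α`. -/
theorem product_is_transitional {F : Type*} [Nonempty F]
    {A : F → Type*} [∀ α, CommRing (A α)] {Λ : F → Type*}
    (ψ : ∀ α, A α → Set (Λ α)) (hψ : ∀ α, IsTransition (ψ α))
    (m : ℕ) (hm : 0 < m)
    (hprin : ∀ (α : F) (a b : A α), ψ α a ∩ ψ α b = ∅ →
      (Ideal.span {a ^ m, b ^ m} : Ideal (A α)).IsPrincipal) :
    IsTransition
      (fun a : ∀ α, A α => {p : Σ α : F, Λ α | p.2 ∈ ψ p.1 (a p.1)}) := by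
  classical
  constructor
  case pm =>
    apply elem_to_pm
    intro a b hab
    have h1 : ∀ α, ∃ r s : A α, (1 + a α * r) * (1 + b α * s) = 0 := by
      intro α
      exact pm_to_elem (hψ α).pm (a α) (b α) (congrFun hab α)
    choose r s hrs using h1
    refine ⟨r, s, funext fun α => ?_⟩
    simpa using hrs α
  case semi =>
    constructor
    case nonempty =>
      obtain ⟨α₀⟩ := ‹Nonempty F›
      obtain ⟨l⟩ := (hψ α₀).semi.nonempty
      exact ⟨⟨α₀, l⟩⟩
    case map_mul =>
      intro a b
      ext ⟨α, l⟩
      simp only [Set.mem_setOf_eq, Pi.mul_apply, (hψ α).semi.map_mul, Set.mem_union]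
    case map_one =>
      ext ⟨α, l⟩
      simp [(hψ α).semi.map_one]
    case eq_univ_iff =>
      intro a
      constructor
      · intro h
        funext α
        refine ((hψ α).semi.eq_univ_iff (a α)).mp ?_
        ext l
        simp only [Set.mem_univ, iff_true]
        exact (Set.eq_univ_iff_forall.mp h ⟨α, l⟩)
      · rintro rfl
        apply Set.eq_univ_iff_forall.mpr
        rintro ⟨α, l⟩
        have : ψ α (0 : A α) = Set.univ := ((hψ α).semi.eq_univ_iff 0).mpr rfl
        show l ∈ ψ α (0 : A α)
        rw [this]; trivial
    case inter_eq =>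
      intro a b
      choose c hc hceq hcsub using fun α => (hψ α).semi.inter_eq (a α) (b α)
      choose x y hxy using fun α => Ideal.mem_span_pair.mp (hc α)
      refine ⟨c, Ideal.mem_span_pair.mpr ⟨x, y, funext fun α => hxy α⟩, ?_, ?_⟩
      · ext ⟨α, l⟩
        have := Set.ext_iff.mp (hceq α) l
        simpa using this
      · rintro ⟨α, l⟩ hl
        exact hcsub α hl
    case principal =>
      intro a b h
      have hd : ∀ α, ψ α (a α) ∩ ψ α (b α) = ∅ := by
        intro α
        ext l
        simp only [Set.mem_inter_iff, Set.mem_empty_iff_false, iff_false, not_and]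
        intro h1 h2
        have : (⟨α, l⟩ : Σ α, Λ α) ∈
            ({p : Σ α : F, Λ α | p.2 ∈ ψ p.1 (a p.1)} ∩ {p | p.2 ∈ ψ p.1 (b p.1)}) := ⟨h1, h2⟩
        rw [h] at this
        exact this
      choose g hg using fun α => (hprin α (a α) (b α) (hd α)).principal
      have hga : ∀ α, ∃ u, a α ^ m = g α * u := by
        intro α
        have : a α ^ m ∈ Ideal.span {a α ^ m, b α ^ m} :=
          Ideal.subset_span (Set.mem_insert _ _)
        rw [hg α] at this
        exact Ideal.mem_span_singleton'.mp this |>.imp fun u hu => by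
          rw [← hu]; ring
      have hgb : ∀ α, ∃ u, b α ^ m = g α * u := by
        intro α
        have : b α ^ m ∈ Ideal.span {a α ^ m, b α ^ m} :=
          Ideal.subset_span (Set.mem_insert_of_mem _ rfl)
        rw [hg α] at this
        exact Ideal.mem_span_singleton'.mp this |>.imp fun u hu => by
          rw [← hu]; ring
      choose u hu using hga
      choose v hv using hgb
      have hgmem : ∀ α, ∃ x y, x * a α ^ m + y * b α ^ m = g α := by
        intro α
        have : g α ∈ Ideal.span {a α ^ m, b α ^ m} := by
          rw [hg α]
          exact Ideal.subset_span rfl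
        exact Ideal.mem_span_pair.mp this
      choose x y hxy using hgmem
      refine ⟨m, m, hm, hm, ⟨g, ?_⟩⟩
      apply le_antisymm
      · rw [Ideal.span_le, Set.insert_subset_iff, Set.singleton_subset_iff]
        constructor
        · exact Ideal.mem_span_singleton'.mpr ⟨u, funext fun α => by
            simpa [mul_comm] using (hu α).symm⟩
        · exact Ideal.mem_span_singleton'.mpr ⟨v, funext fun α => by
            simpa [mul_comm] using (hv α).symm⟩
      · rw [Ideal.submodule_span_eq, Ideal.span_le, Set.singleton_subset_iff]
        exact Ideal.mem_span_pair.mpr ⟨x, y, funext fun α => by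
          simpa using hxy α⟩
  case separates =>
    rintro ⟨α₁, μ₁⟩ ⟨α₂, μ₂⟩ hne
    by_cases hα : α₁ = α₂
    · subst hα
      have hμ : μ₁ ≠ μ₂ := fun h => hne (by rw [h])
      obtain ⟨a₀, ha₀⟩ := (hψ α₁).separates μ₁ μ₂ hμ
      refine ⟨Function.update (1 : ∀ β, A β) α₁ a₀, ?_⟩
      simpa [Set.mem_setOf_eq, Function.update_self] using ha₀
    · refine ⟨Function.update (1 : ∀ β, A β) α₁ 0, Or.inl ⟨?_, ?_⟩⟩
      · show μ₁ ∈ ψ α₁ (Function.update (1 : ∀ β, A β) α₁ (0 : A α₁) α₁)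
        rw [Function.update_self, ((hψ α₁).semi.eq_univ_iff 0).mpr rfl]
        trivial
      · show μ₂ ∉ ψ α₂ (Function.update (1 : ∀ β, A β) α₁ (0 : A α₁) α₂)
        rw [Function.update_of_ne (Ne.symm hα), Pi.one_apply, (hψ α₂).semi.map_one]
        exact Set.notMem_empty _
  case disjoint =>
    rintro ⟨α, μ⟩ a hl
    obtain ⟨b₀, hb₁, hb₂⟩ := (hψ α).disjoint μ (a α) hl
    refine ⟨Function.update (1 : ∀ β, A β) α b₀, ?_, ?_⟩
    · show μ ∈ ψ α (Function.update (1 : ∀ β, A β) α b₀ α)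
      rwa [Function.update_self]
    · ext ⟨β, ν⟩
      simp only [Set.mem_inter_iff, Set.mem_setOf_eq, Set.mem_empty_iff_false, iff_false, not_and]
      intro h1 h2
      by_cases hβ : β = α
      · subst hβ
        rw [Function.update_self] at h2
        exact Set.eq_empty_iff_forall_notMem.mp hb₂ ν ⟨h1, h2⟩
      · rw [Function.update_of_ne hβ, Pi.one_apply, (hψ β).semi.map_one] at h2
        exact h2
end

section
/- Let F be a NeBot filter on ℕ (corresponding to a nontrivial ideal I of subsets of ℕ via complements). Then: (a) the set A_I = {x : ℕ → ℝ | there exists l ∈ ℝ with x tending to l along F} is a subring of the ring ℕ → ℝ of real sequences with pointwise operations (so A_I is a commutative ring with unity); (b) an element x ∈ A_I is a unit of the ring A_I if and only if x n ≠ 0 for every n ∈ ℕ and the (unique) limit l of x along F is nonzero. -/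
/-- The set of `I`-convergent real sequences, i.e. sequences converging to some
real limit along the filter `F` associated to the ideal `I`. -/
def IConvSet (F : Filter ℕ) : Set (ℕ → ℝ) :=
  {x : ℕ → ℝ | ∃ l : ℝ, Filter.Tendsto x F (nhds l)}

/-- The subring of `I`-convergent sequences. -/
def IConvSubring (F : Filter ℕ) : Subring (ℕ → ℝ) where
  carrier := IConvSet F
  zero_mem' := ⟨0, tendsto_const_nhds⟩
  one_mem' := ⟨1, tendsto_const_nhds⟩
  add_mem' := fun ⟨l, hl⟩ ⟨m, hm⟩ => ⟨l + m, hl.add hm⟩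
  mul_mem' := fun ⟨l, hl⟩ ⟨m, hm⟩ => ⟨l * m, hl.mul hm⟩
  neg_mem' := fun ⟨l, hl⟩ => ⟨-l, hl.neg⟩

/-- Theorem: for a NeBot filter `F` on `ℕ` (i.e. a nontrivial ideal `I` of subsets
of `ℕ`): (a) the set `A_I` of `I`-convergent real sequences is a subring of the ring
of real sequences with pointwise operations; (b) an element `x` of `A_I` is a unit of
`A_I` iff `x n ≠ 0` for all `n` and the limit of `x` along `F` is nonzero. -/
theorem iConv_subring_and_units (F : Filter ℕ) [F.NeBot] :
    ∃ R : Subring (ℕ → ℝ), (R : Set (ℕ → ℝ)) = IConvSet F ∧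
      ∀ (x : ℕ → ℝ) (hx : x ∈ R),
        IsUnit (⟨x, hx⟩ : R) ↔
          ((∀ n : ℕ, x n ≠ 0) ∧ ∃ l : ℝ, l ≠ 0 ∧ Filter.Tendsto x F (nhds l)) := by
  refine ⟨IConvSubring F, rfl, fun x hx => ?_⟩
  constructor
  · rintro ⟨⟨⟨a, ha⟩, ⟨b, hb⟩, hab, hba⟩, hval⟩
    have hax : a = x := congrArg Subtype.val hval
    subst hax
    have hmul : a * b = 1 := congrArg Subtype.val hab
    have hne : ∀ n, a n ≠ 0 := by
      intro n h0
      have := congrFun hmul n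
      simp [Pi.mul_apply, h0] at this
    obtain ⟨l, hl⟩ := ha
    obtain ⟨m, hm⟩ := hb
    have h1 : Filter.Tendsto (a * b) F (nhds (l * m)) := hl.mul hm
    rw [hmul] at h1
    have h2 : (1 : ℕ → ℝ) = fun _ => (1 : ℝ) := rfl
    have hlim : l * m = 1 := by
      have := tendsto_nhds_unique (h2 ▸ h1) (tendsto_const_nhds : Filter.Tendsto (fun _ : ℕ => (1:ℝ)) F (nhds 1))
      exact this
    refine ⟨hne, l, fun h0 => by simp [h0] at hlim, hl⟩
  · rintro ⟨hne, l, hl0, hl⟩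
    have hymem : (fun n => (x n)⁻¹) ∈ IConvSubring F := ⟨l⁻¹, hl.inv₀ hl0⟩
    refine ⟨⟨⟨x, hx⟩, ⟨fun n => (x n)⁻¹, hymem⟩, ?_, ?_⟩, rfl⟩
    · exact Subtype.ext (funext fun n => mul_inv_cancel₀ (hne n))
    · exact Subtype.ext (funext fun n => inv_mul_cancel₀ (hne n))
end

section
/- Let F be a filter on ℕ containing the cofinite filter (corresponding to an admissible ideal I of subsets of ℕ, i.e. a nontrivial ideal containing all finite sets). Then the ring A_I of I-convergent real sequences (a subring of ℕ → ℝ with pointwise operations) is a transitional ring: A_I is a pm-ring, and there exist a nonempty set Λ and a transition map f : A_I → Set Λ; one may take Λ = ℕ ∪ {0} (with 0 an added point) and f(x) = Z(x) if I-lim x ≠ 0 and f(x) = Z(x) ∪ {0} if I-lim x = 0, where Z(x) = {n ∈ ℕ | x n = 0}. -/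
/-!
Every element `x` of `A_I` is detected by the real characters "evaluate at `n`" and "take the
`I`-limit", and `f(x)` is exactly the set of characters killing `x`. A zero locus of a jointly
injective family of characters into an ordered field is a semi-transition map as soon as elements
killed by no character are units, since `a² + b²` vanishes exactly where `a` and `b` do. Both
conditions are clear for `A_I`, where such an element has a pointwise inverse converging to the
inverse limit. Admissibility makes `f` hit every singleton: `{n}` is `f` of the sequence vanishing
only at `n`, and `{0}` is `f(1/(n+1))`; this yields the separation axioms. Finally `A_I` is
Gelfand: if `a + b = 1` then, say, `I`-lim `a ≠ 0`, and `r = -a⁻¹`, `s = -𝟙_{a = 0}` lie in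
`A_I` with `(1 + a r)(1 + b s) = 0`; Gelfand rings are pm-rings.
-/

open Filter Topology

theorem isPMRing_of_forall_add_eq_one {A : Type*} [CommRing A]
    (h : ∀ a b : A, a + b = 1 → ∃ r s : A, (1 + a * r) * (1 + b * s) = 0) : IsPMRing A := by
  intro P hP
  obtain ⟨M, hM, hPM⟩ := Ideal.exists_le_maximal P hP.ne_top
  refine ⟨M, ⟨hM, hPM⟩, fun M' ⟨hM', hPM'⟩ => ?_⟩
  by_contra hne
  obtain ⟨a, haM', b, hbM, hab⟩ :=
    Submodule.mem_sup.mp ((Ideal.eq_top_iff_one _).mp (hM'.coprime_of_ne hM hne))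
  obtain ⟨r, s, hrs⟩ := h a b hab
  rcases hP.mem_or_mem (hrs ▸ P.zero_mem) with h1 | h1
  · refine hM'.ne_top ((Ideal.eq_top_iff_one _).mpr ?_)
    simpa using M'.sub_mem (hPM' h1) (M'.mul_mem_right r haM')
  · refine hM.ne_top ((Ideal.eq_top_iff_one _).mpr ?_)
    simpa using M.sub_mem (hPM h1) (M.mul_mem_right s hbM)

theorem isSemiTransition_zeroLocus {A K Λ : Type*} [CommRing A] [CommRing K] [LinearOrder K]
    [IsStrictOrderedRing K] [Nonempty Λ] (φ : Λ → A →+* K)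
    (h_inj : ∀ a, (∀ l, φ l a = 0) → a = 0) (h_unit : ∀ a, (∀ l, φ l a ≠ 0) → IsUnit a) :
    IsSemiTransition fun a => {l | φ l a = 0} := by
  have zeroLocus_sq_add_sq (a b : A) :
      {l | φ l (a * a + b * b) = 0} = {l | φ l a = 0} ∩ {l | φ l b = 0} := by
    ext l
    simp [mul_self_add_mul_self_eq_zero]
  refine ⟨inferInstance, fun a b => ?_, ?_, fun a => ?_, fun a b => ?_, fun a b hab => ?_⟩
  · ext l
    simp
  · ext l
    simp
  · refine ⟨fun h => h_inj a fun l => ?_, fun h => by ext; simp [h]⟩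
    simpa using h.ge (Set.mem_univ l)
  · refine ⟨a * a + b * b, Ideal.mem_span_pair.mpr ⟨a, b, rfl⟩, (zeroLocus_sq_add_sq a b).symm, ?_⟩
    rw [zeroLocus_sq_add_sq]
    rintro l ⟨ha, hb⟩
    simp_all
  · have hunit : IsUnit (a * a + b * b) := h_unit _ fun l hl =>
      (Set.eq_empty_iff_forall_notMem.mp (zeroLocus_sq_add_sq a b ▸ hab)) l hl
    refine ⟨1, 1, one_pos, one_pos, ?_⟩
    rw [pow_one, pow_one, Ideal.eq_top_of_isUnit_mem _ (Ideal.mem_span_pair.mpr ⟨a, b, rfl⟩) hunit]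
    exact ⟨⟨1, Ideal.span_singleton_one.symm⟩⟩

theorem IsTransition.of_forall_exists_eq_singleton {A Λ : Type*} [CommRing A] {ψ : A → Set Λ}
    (hpm : IsPMRing A) (hψ : IsSemiTransition ψ) (h : ∀ l, ∃ a, ψ a = {l}) : IsTransition ψ where
  pm := hpm
  semi := hψ
  separates l₁ l₂ hne := by
    obtain ⟨a, ha⟩ := h l₁
    exact ⟨a, Or.inl ⟨by simp [ha], by simpa [ha] using hne.symm⟩⟩
  disjoint l a hl := by
    obtain ⟨b, hb⟩ := h l
    exact ⟨b, by simp [hb], by simpa [hb] using hl⟩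

def iConvSubring (F : Filter ℕ) : Subring (ℕ → ℝ) where
  carrier := IConvSet F
  mul_mem' := fun ⟨la, ha⟩ ⟨lb, hb⟩ => ⟨la * lb, ha.mul hb⟩
  one_mem' := ⟨1, tendsto_const_nhds⟩
  add_mem' := fun ⟨la, ha⟩ ⟨lb, hb⟩ => ⟨la + lb, ha.add hb⟩
  zero_mem' := ⟨0, tendsto_const_nhds⟩
  neg_mem' := fun ⟨la, ha⟩ => ⟨-la, ha.neg⟩

namespace iConvSubring

variable {F : Filter ℕ}

theorem exists_tendsto (x : iConvSubring F) : ∃ l, Tendsto (x : ℕ → ℝ) F (𝓝 l) := x.2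

variable [F.NeBot]

noncomputable def limHom (F : Filter ℕ) [F.NeBot] : iConvSubring F →+* ℝ where
  toFun x := limUnder F x
  map_one' := tendsto_const_nhds.limUnder_eq
  map_mul' x y :=
    ((tendsto_nhds_limUnder (exists_tendsto x)).mul
      (tendsto_nhds_limUnder (exists_tendsto y))).limUnder_eq
  map_zero' := tendsto_const_nhds.limUnder_eq
  map_add' x y :=
    ((tendsto_nhds_limUnder (exists_tendsto x)).add
      (tendsto_nhds_limUnder (exists_tendsto y))).limUnder_eq

theorem tendsto_limHom (x : iConvSubring F) : Tendsto x F (𝓝 (limHom F x)) :=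
  tendsto_nhds_limUnder (exists_tendsto x)

theorem limHom_eq_iff {x : iConvSubring F} {l : ℝ} : limHom F x = l ↔ Tendsto x F (𝓝 l) :=
  ⟨fun h => h ▸ tendsto_limHom x, fun h => tendsto_nhds_unique (tendsto_limHom x) h⟩

/-- `none` stands for the added point `0` of `Λ = ℕ ∪ {0}`. -/
noncomputable def character (F : Filter ℕ) [F.NeBot] : Option ℕ → iConvSubring F →+* ℝ
  | none => limHom F
  | some n => (Pi.evalRingHom _ n).comp (iConvSubring F).subtype

@[simp] theorem character_none (x : iConvSubring F) : character F none x = limHom F x := rfl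

@[simp] theorem character_some (n : ℕ) (x : iConvSubring F) : character F (some n) x = x.1 n :=
  rfl

theorem eq_zero_of_forall_character_eq_zero (x : iConvSubring F)
    (hx : ∀ p, character F p x = 0) : x = 0 :=
  Subtype.ext (funext fun n => hx (some n))

theorem isUnit_of_forall_character_ne_zero (x : iConvSubring F)
    (hx : ∀ p, character F p x ≠ 0) : IsUnit x := by
  have hinv : (x : ℕ → ℝ)⁻¹ ∈ iConvSubring F :=
    ⟨_, (tendsto_limHom x).inv₀ (hx none)⟩
  refine IsUnit.of_mul_eq_one ⟨_, hinv⟩ (Subtype.ext (funext fun n => ?_))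
  exact mul_inv_cancel₀ (hx (some n))

theorem exists_mul_eq_zero_of_add_eq_one_of_limHom_ne_zero {a b : iConvSubring F}
    (hab : a + b = 1) (ha : limHom F a ≠ 0) : ∃ r s : iConvSubring F, (1 + a * r) * (1 + b * s) = 0 := by
  have hr : -(a : ℕ → ℝ)⁻¹ ∈ iConvSubring F := ⟨_, ((tendsto_limHom a).inv₀ ha).neg⟩
  have hs : (fun n => if a.1 n = 0 then (-1 : ℝ) else 0) ∈ iConvSubring F := by
    refine ⟨0, tendsto_const_nhds.congr' ?_⟩
    filter_upwards [(tendsto_limHom a).eventually_ne ha] with n hn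
    simp [hn]
  refine ⟨⟨_, hr⟩, ⟨_, hs⟩, Subtype.ext (funext fun n => ?_)⟩
  have habn : a.1 n + b.1 n = 1 := congrFun (congrArg Subtype.val hab) n
  by_cases han : a.1 n = 0
  · have hbn : b.1 n = 1 := by simpa [han] using habn
    simp [han, hbn]
  · simp [han]

theorem exists_mul_eq_zero_of_add_eq_one (a b : iConvSubring F) (hab : a + b = 1) :
    ∃ r s : iConvSubring F, (1 + a * r) * (1 + b * s) = 0 := by
  by_cases ha : limHom F a = 0
  · have hb : limHom F b ≠ 0 := by
      have := congrArg (limHom F) hab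
      rw [map_add, map_one, ha, zero_add] at this
      exact this ▸ one_ne_zero
    obtain ⟨s, r, h⟩ := exists_mul_eq_zero_of_add_eq_one_of_limHom_ne_zero (add_comm a b ▸ hab) hb
    exact ⟨r, s, mul_comm (1 + b * s) _ ▸ h⟩
  · exact exists_mul_eq_zero_of_add_eq_one_of_limHom_ne_zero hab ha

theorem exists_zeroLocus_eq_singleton (hF : F ≤ cofinite) (p : Option ℕ) :
    ∃ x : iConvSubring F, {q | character F q x = 0} = {p} := by
  cases p with
  | none =>
    have hu : Tendsto (fun n : ℕ => ((n : ℝ) + 1)⁻¹) F (𝓝 0) := by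
      simpa using (tendsto_one_div_add_atTop_nhds_zero_nat (𝕜 := ℝ)).mono_left
        (Nat.cofinite_eq_atTop ▸ hF)
    refine ⟨⟨_, _, hu⟩, Set.ext fun q => ?_⟩
    cases q with
    | none => simpa using limHom_eq_iff.mpr hu
    | some n =>
      simp only [Set.mem_ofPred_eq, character_some, inv_eq_zero, Set.mem_singleton_iff,
        reduceCtorEq, iff_false]
      positivity
  | some n =>
    have he : Tendsto (fun k => if k = n then (0 : ℝ) else 1) F (𝓝 1) := by
      refine tendsto_const_nhds.congr' ?_
      filter_upwards [hF (Set.finite_singleton n).compl_mem_cofinite] with k hk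
      simp_all
    refine ⟨⟨_, _, he⟩, Set.ext fun q => ?_⟩
    cases q with
    | none => simp [(limHom_eq_iff (x := ⟨_, _, he⟩)).mpr he]
    | some k => simp [eq_comm]

end iConvSubring

/-- Theorem: for an admissible ideal `I` of subsets of `ℕ` (i.e. a NeBot filter `F`
on `ℕ` containing the cofinite filter), the ring `A_I` of `I`-convergent real
sequences is a transitional ring: it is a pm-ring and the map
`f(x) = Z(x)` if `I`-lim `x ≠ 0`, `f(x) = Z(x) ∪ {0}` if `I`-lim `x = 0`
(into subsets of `ℕ ∪ {0}`, modelled as `Option ℕ` with `none` the added point)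
is a transition map on it. -/
theorem iConv_is_transitional (F : Filter ℕ) [F.NeBot] (hF : F ≤ Filter.cofinite) :
    ∃ R : Subring (ℕ → ℝ), (R : Set (ℕ → ℝ)) = IConvSet F ∧
      IsTransition (fun x : R => {p : Option ℕ |
        (∃ n : ℕ, p = some n ∧ (x : ℕ → ℝ) n = 0) ∨
        (p = none ∧ Filter.Tendsto (x : ℕ → ℝ) F (nhds 0))}) := by
  refine ⟨iConvSubring F, rfl, ?_⟩
  have hψ : (fun x : iConvSubring F => {p : Option ℕ |
      (∃ n : ℕ, p = some n ∧ (x : ℕ → ℝ) n = 0) ∨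
      (p = none ∧ Filter.Tendsto (x : ℕ → ℝ) F (nhds 0))}) =
      fun x => {p | iConvSubring.character F p x = 0} := by
    funext x
    ext (_ | n) <;> simp [iConvSubring.limHom_eq_iff]
  rw [hψ]
  exact .of_forall_exists_eq_singleton
    (isPMRing_of_forall_add_eq_one iConvSubring.exists_mul_eq_zero_of_add_eq_one)
    (isSemiTransition_zeroLocus _ iConvSubring.eq_zero_of_forall_character_eq_zero
      iConvSubring.isUnit_of_forall_character_ne_zero)
    (iConvSubring.exists_zeroLocus_eq_singleton hF)
end
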